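/- arXiv:2210.02679 — 7 statements merged into one kernel-verified Lean document; each statement's English description precedes it below -/
import Mathlib

section
/- Let G be a group, let L ≤ H be finite subgroups of G, and let g ∈ G satisfy g² ∈ L. Then either L ∩ H^g = H ∩ L^g = L ∩ L^g, or the three subgroups L ∩ H^g, H ∩ L^g and L ∩ L^g are pairwise distinct. -/
/-!
Conjugation by `g` carries `L ∩ H^g` onto `H ∩ L^g` (because `g² ∈ H`) and fixes `L ∩ L^g`
(because `g² ∈ L`), and it is injective on subgroups. Hence `L ∩ H^g = L ∩ L^g` if and only if
`H ∩ L^g = L ∩ L^g`. Moreover `L ∩ L^g ≤ L ∩ H^g` always, and `L ∩ H^g = H ∩ L^g` forces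
`L ∩ H^g ≤ L ∩ L^g`, so any single coincidence among the three subgroups makes all of them equal.
-/

/-- The conjugate subgroup `H^g = g⁻¹ H g`. -/
def conjSG {G : Type*} [Group G] (H : Subgroup G) (g : G) : Subgroup G :=
  Subgroup.comap (MulAut.conj g).toMonoidHom H

section conjSG

variable {G : Type*} [Group G]

lemma mem_conjSG {H : Subgroup G} {g x : G} : x ∈ conjSG H g ↔ g * x * g⁻¹ ∈ H := Iff.rfl

lemma conjSG_conjSG (H : Subgroup G) (a b : G) : conjSG (conjSG H a) b = conjSG H (a * b) := by
  ext x
  simp only [mem_conjSG, mul_inv_rev, mul_assoc]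

lemma conjSG_one (H : Subgroup G) : conjSG H 1 = H := by
  ext x
  simp only [mem_conjSG, one_mul, inv_one, mul_one]

lemma conjSG_injective (g : G) : Function.Injective (conjSG · g) := by
  intro H K hHK
  simpa only [conjSG_conjSG, mul_inv_cancel, conjSG_one] using congrArg (conjSG · g⁻¹) hHK

lemma conjSG_inf (H K : Subgroup G) (g : G) : conjSG (H ⊓ K) g = conjSG H g ⊓ conjSG K g :=
  Subgroup.comap_inf _ _ _

lemma conjSG_mono {H K : Subgroup G} (hHK : H ≤ K) (g : G) : conjSG H g ≤ conjSG K g :=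
  Subgroup.comap_mono hHK

lemma conjSG_eq_self_of_mem {H : Subgroup G} {g : G} (hg : g ∈ H) : conjSG H g = H := by
  ext x
  rw [mem_conjSG, H.mul_mem_cancel_right (H.inv_mem hg), H.mul_mem_cancel_left hg]

lemma conjSG_inf_conjSG (L H : Subgroup G) {g : G} (hg2 : g ^ 2 ∈ H) :
    conjSG (L ⊓ conjSG H g) g = H ⊓ conjSG L g := by
  rw [conjSG_inf, conjSG_conjSG, ← sq, conjSG_eq_self_of_mem hg2, inf_comm]

end conjSG

theorem stabilizer_trichotomy_general {G : Type*} [Group G] (L H : Subgroup G) (hLH : L ≤ H)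
    (g : G) (hg2 : g ^ 2 ∈ L) :
    (L ⊓ conjSG H g = H ⊓ conjSG L g ∧ H ⊓ conjSG L g = L ⊓ conjSG L g) ∨
    (L ⊓ conjSG H g ≠ H ⊓ conjSG L g ∧ L ⊓ conjSG H g ≠ L ⊓ conjSG L g ∧
      H ⊓ conjSG L g ≠ L ⊓ conjSG L g) := by
  set A := L ⊓ conjSG H g
  set B := H ⊓ conjSG L g
  set C := L ⊓ conjSG L g
  have hAC_iff_hBC : A = C ↔ B = C := by
    rw [← (conjSG_injective g).eq_iff, conjSG_inf_conjSG L H (hLH hg2), conjSG_inf_conjSG L L hg2]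
  have hAC_of_hAB : A = B → A = C := fun hAB =>
    le_antisymm (le_inf inf_le_left (hAB ▸ inf_le_right)) (inf_le_inf_left L (conjSG_mono hLH g))
  by_cases hAB : A = B
  · exact Or.inl ⟨hAB, hAB ▸ hAC_of_hAB hAB⟩
  · refine Or.inr ⟨hAB, fun hAC => hAB ?_, fun hBC => hAB ?_⟩
    · exact hAC.trans (hAC_iff_hBC.mp hAC).symm
    · exact (hAC_iff_hBC.mpr hBC).trans hBC.symm

/-- **Trichotomy of stabilizers.**  Let `L ≤ H` be finite subgroups of a group `G` and
`g ∈ G` with `g² ∈ L`.  Then either `L ∩ H^g = H ∩ L^g = L ∩ L^g`, or the three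
subgroups `L ∩ H^g`, `H ∩ L^g` and `L ∩ L^g` are pairwise distinct. -/
theorem stabilizer_trichotomy {G : Type*} [Group G] (L H : Subgroup G) (hLH : L ≤ H)
    (hLfin : (L : Set G).Finite) (hHfin : (H : Set G).Finite) (g : G) (hg2 : g ^ 2 ∈ L) :
    (L ⊓ conjSG H g = H ⊓ conjSG L g ∧ H ⊓ conjSG L g = L ⊓ conjSG L g) ∨
    (L ⊓ conjSG H g ≠ H ⊓ conjSG L g ∧ L ⊓ conjSG H g ≠ L ⊓ conjSG L g ∧
      H ⊓ conjSG L g ≠ L ⊓ conjSG L g) :=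
  stabilizer_trichotomy_general L H hLH g hg2
end

section
/- Let Γ be a finite connected simple graph with at least one edge, let G ≤ Aut(Γ) be arc-transitive on Γ, and let B be a block system for G on the vertex set VΓ with 1 < |B| < |VΓ|. Suppose that Γ is locally primitive for G and that the valency (common vertex degree) of Γ equals the valency of the quotient graph Γ_B. Then Γ is a cover of Γ_B: for every pair of blocks B₁, B₂ that are adjacent in Γ_B, every vertex of B₁ has exactly one neighbour in B₂ and every vertex of B₂ has exactly one neighbour in B₁. -/
/-!
Arc-transitivity forbids edges inside a block, and local primitivity makes the partition of
`Γ(α)` induced by the blocks either discrete or trivial. If it were trivial for one arc, it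
would be trivial for every arc, and walking along a connected `Γ` shows that all edges leaving
one block end in a single block, so `val Γ_B ≤ 1` and `Γ(α)` has at most one vertex anyway. Hence
`α ↦ [α]` is injective on `Γ(α)`; its image lies in `Γ_B([α])`, which has the same size, so every
block adjacent to `[α]` contains exactly one neighbour of `α`.
-/

/-- The quotient graph of a graph by a partition (given as a setoid): two classes are
adjacent iff they are distinct and contain some pair of adjacent vertices. -/
def quotGraph {V : Type*} (Γ : SimpleGraph V) (B : Setoid V) : SimpleGraph (Quotient B) where
  Adj x y := x ≠ y ∧ ∃ a b : V, Quotient.mk B a = x ∧ Quotient.mk B b = y ∧ Γ.Adj a b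
  symm := by
    constructor
    rintro x y ⟨hne, a, b, ha, hb, hab⟩
    exact ⟨hne.symm, b, a, hb, ha, hab.symm⟩
  loopless := by
    constructor
    rintro x ⟨hne, -⟩
    exact hne rfl

theorem SimpleGraph.Preconnected.forall_of_adj_imp {V : Type*} {Γ : SimpleGraph V}
    (hconn : Γ.Preconnected) {P : V → Prop} (hstep : ∀ u v, Γ.Adj u v → P u → P v)
    {u : V} (hu : P u) (v : V) : P v := by
  induction (Γ.reachable_iff_reflTransGen u v).1 (hconn u v) with
  | refl => exact hu
  | tail _ hadj ih => exact hstep _ _ hadj ih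

section

variable {V G : Type*} [Group G] [MulAction G V] {Γ : SimpleGraph V} {B : Setoid V}

theorem rel_smul_iff (hinv : ∀ (g : G) (a b : V), B.r a b → B.r (g • a) (g • b))
    (g : G) (a b : V) : B.r (g • a) (g • b) ↔ B.r a b :=
  ⟨fun h => by simpa using hinv g⁻¹ _ _ h, hinv g a b⟩

theorem image_smul_neighborSet (hact : ∀ (g : G) (a b : V), Γ.Adj (g • a) (g • b) ↔ Γ.Adj a b)
    (g : G) (v : V) : (fun x => g • x) '' Γ.neighborSet v = Γ.neighborSet (g • v) := by
  ext x
  refine ⟨?_, fun hx => ⟨g⁻¹ • x, ?_, smul_inv_smul g x⟩⟩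
  · rintro ⟨y, hy, rfl⟩
    exact (hact g v y).2 hy
  · exact (hact g v _).1 (by rwa [smul_inv_smul])

theorem image_smul_setOf_rel (hinv : ∀ (g : G) (a b : V), B.r a b → B.r (g • a) (g • b))
    (g : G) (w : V) : (fun x => g • x) '' {x | B.r w x} = {x | B.r (g • w) x} := by
  ext x
  refine ⟨?_, fun hx => ⟨g⁻¹ • x, ?_, smul_inv_smul g x⟩⟩
  · rintro ⟨y, hy, rfl⟩
    exact hinv g w y hy
  · exact (rel_smul_iff hinv g w _).1 (by rwa [smul_inv_smul])

theorem not_rel_of_adj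
    (harc : ∀ a b c d : V, Γ.Adj a b → Γ.Adj c d → ∃ g : G, g • a = c ∧ g • b = d)
    (hinv : ∀ (g : G) (a b : V), B.r a b → B.r (g • a) (g • b))
    {a₀ b₀ : V} (h₀ : Γ.Adj a₀ b₀) (hne₀ : ¬ B.r a₀ b₀) {u w : V} (huw : Γ.Adj u w) :
    ¬ B.r u w := by
  obtain ⟨g, rfl, rfl⟩ := harc u w a₀ b₀ huw h₀
  exact fun h => hne₀ (hinv g u w h)

theorem rel_of_adj_of_forall_rel
    (hact : ∀ (g : G) (a b : V), Γ.Adj (g • a) (g • b) ↔ Γ.Adj a b)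
    (harc : ∀ a b c d : V, Γ.Adj a b → Γ.Adj c d → ∃ g : G, g • a = c ∧ g • b = d)
    (hinv : ∀ (g : G) (a b : V), B.r a b → B.r (g • a) (g • b))
    {v w : V} (hvw : Γ.Adj v w) (hfull : ∀ x, Γ.Adj v x → B.r w x) :
    ∀ ⦃p q⦄, Γ.Adj p q → ∀ ⦃x⦄, Γ.Adj p x → B.r q x := by
  intro p q hpq x hpx
  obtain ⟨g, rfl, rfl⟩ := harc v w p q hvw hpq
  rw [← smul_inv_smul g x, rel_smul_iff hinv]
  exact hfull _ ((hact g v _).1 (by rwa [smul_inv_smul]))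

theorem quotGraph_neighborSet_subset_singleton (hconn : Γ.Preconnected)
    (hact : ∀ (g : G) (a b : V), Γ.Adj (g • a) (g • b) ↔ Γ.Adj a b)
    (harc : ∀ a b c d : V, Γ.Adj a b → Γ.Adj c d → ∃ g : G, g • a = c ∧ g • b = d)
    (hinv : ∀ (g : G) (a b : V), B.r a b → B.r (g • a) (g • b))
    {v w : V} (hvw : Γ.Adj v w) (hne : ¬ B.r v w) (hfull : ∀ x, Γ.Adj v x → B.r w x) :
    (quotGraph Γ B).neighborSet (Quotient.mk B v) ⊆ {Quotient.mk B w} := by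
  have htrans := rel_of_adj_of_forall_rel hact harc hinv hvw hfull
  -- Along any walk from `v`, the vertices alternate between the blocks of `v` and `w`.
  have halt : ∀ u, (B.r v u ∧ ∀ x, Γ.Adj u x → B.r w x) ∨
      (B.r w u ∧ ∀ x, Γ.Adj u x → B.r v x) := by
    refine hconn.forall_of_adj_imp ?_ (Or.inl ⟨B.refl v, hfull⟩)
    rintro u x hux (⟨hvu, hu⟩ | ⟨hwu, hu⟩)
    · exact Or.inr ⟨hu x hux, fun y hy => B.trans hvu (htrans hux.symm hy)⟩
    · exact Or.inl ⟨hu x hux, fun y hy => B.trans hwu (htrans hux.symm hy)⟩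
  rintro X ⟨-, p, q, hp, rfl, hpq⟩
  rcases halt p with ⟨-, hp'⟩ | ⟨hwp, -⟩
  · exact Quotient.sound (B.symm (hp' q hpq))
  · exact absurd (B.symm (B.trans hwp (Quotient.exact hp))) hne

theorem injOn_mk_neighborSet_or_forall_rel
    (hact : ∀ (g : G) (a b : V), Γ.Adj (g • a) (g • b) ↔ Γ.Adj a b)
    (hinv : ∀ (g : G) (a b : V), B.r a b → B.r (g • a) (g • b)) {v : V}
    (hprim : ∀ T : Set V, T ⊆ Γ.neighborSet v →
      (∀ g : G, g • v = v → ((fun x => g • x) '' T = T ∨ Disjoint ((fun x => g • x) '' T) T)) →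
      T.Subsingleton ∨ T = Γ.neighborSet v) :
    Set.InjOn (Quotient.mk B) (Γ.neighborSet v) ∨ ∃ w, Γ.Adj v w ∧ ∀ x, Γ.Adj v x → B.r w x := by
  have hblock : ∀ w, (Γ.neighborSet v ∩ {x | B.r w x}).Subsingleton ∨
      Γ.neighborSet v ∩ {x | B.r w x} = Γ.neighborSet v := by
    intro w
    refine hprim _ Set.inter_subset_left fun g hg => ?_
    rw [Set.image_inter (MulAction.injective g), image_smul_neighborSet hact, hg,
      image_smul_setOf_rel hinv]
    by_cases hw : B.r w (g • w)
    · left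
      ext x
      exact and_congr_right fun _ => ⟨B.trans hw, B.trans (B.symm hw)⟩
    · right
      exact Set.disjoint_left.2 fun x hx hx' => hw (B.trans hx'.2 (B.symm hx.2))
  refine or_iff_not_imp_right.2 fun hnot w hw w' hw' hww' => ?_
  rcases hblock w with hsub | heq
  · exact hsub ⟨hw, B.refl w⟩ ⟨hw', Quotient.exact hww'⟩
  · exact absurd ⟨w, hw, fun x hx => (heq.symm.subset hx).2⟩ hnot

end

theorem image_mk_neighborSet_eq {V : Type*} [Finite V] {Γ : SimpleGraph V} {B : Setoid V}
    {a : V} (hintra : ∀ w, Γ.Adj a w → ¬ B.r a w)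
    (hinj : Set.InjOn (Quotient.mk B) (Γ.neighborSet a))
    (hval : ((quotGraph Γ B).neighborSet (Quotient.mk B a)).ncard ≤ (Γ.neighborSet a).ncard) :
    Quotient.mk B '' Γ.neighborSet a = (quotGraph Γ B).neighborSet (Quotient.mk B a) := by
  refine Set.eq_of_subset_of_ncard_le ?_ (by rwa [hinj.ncard_image])
  rintro X ⟨w, hw, rfl⟩
  exact ⟨fun h => hintra w hw (Quotient.exact h), a, w, rfl, rfl, hw⟩

theorem locally_primitive_cover_general {V : Type*} [Fintype V] (Γ : SimpleGraph V)
    (G : Type*) [Group G] [MulAction G V]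
    (hact : ∀ (g : G) (a b : V), Γ.Adj (g • a) (g • b) ↔ Γ.Adj a b)
    (hconn : Γ.Connected)
    (harc : ∀ a b c d : V, Γ.Adj a b → Γ.Adj c d → ∃ g : G, g • a = c ∧ g • b = d)
    (B : Setoid V)
    (hinv : ∀ (g : G) (a b : V), B.r a b → B.r (g • a) (g • b))
    (hlocprim : ∀ α : V,
      (∀ b c : V, Γ.Adj α b → Γ.Adj α c → ∃ g : G, g • α = α ∧ g • b = c) ∧
      (∀ T : Set V, T ⊆ Γ.neighborSet α →
        (∀ g : G, g • α = α →
          ((fun v => g • v) '' T = T ∨ Disjoint ((fun v => g • v) '' T) T)) →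
        T.Subsingleton ∨ T = Γ.neighborSet α))
    (d : ℕ)
    (hvalG : ∀ v : V, (Γ.neighborSet v).ncard = d)
    (hvalQ : ∀ x : Quotient B, ((quotGraph Γ B).neighborSet x).ncard = d) :
    ∀ a b : V, (quotGraph Γ B).Adj (Quotient.mk B a) (Quotient.mk B b) →
      ∃! c : V, B.r b c ∧ Γ.Adj a c := by
  intro a b hab
  obtain ⟨a₀, b₀, ha₀, hb₀, h₀⟩ := hab.2
  have hintra : ∀ u w, Γ.Adj u w → ¬ B.r u w := fun u w =>
    not_rel_of_adj harc hinv h₀ fun h => hab.1 (ha₀ ▸ hb₀ ▸ Quotient.sound h)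
  have hinj : Set.InjOn (Quotient.mk B) (Γ.neighborSet a) := by
    rcases injOn_mk_neighborSet_or_forall_rel hact hinv (hlocprim a).2 with hinj | ⟨w, haw, hfull⟩
    · exact hinj
    · have hQ := Set.ncard_le_ncard (quotGraph_neighborSet_subset_singleton
        hconn.preconnected hact harc hinv haw (hintra a w haw) hfull)
      refine Set.Subsingleton.injOn ?_ _
      rw [← Set.ncard_le_one_iff_subsingleton, hvalG, ← hvalQ (Quotient.mk B a)]
      simpa using hQ
  obtain ⟨c, hc, hcb⟩ : Quotient.mk B b ∈ Quotient.mk B '' Γ.neighborSet a := by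
    rw [image_mk_neighborSet_eq (hintra a) hinj (by rw [hvalG, hvalQ])]
    exact hab
  refine ⟨c, ⟨B.symm (Quotient.exact hcb), hc⟩, fun c' ⟨hbc', hac'⟩ => ?_⟩
  exact hinj hac' hc ((Quotient.sound hbc').symm.trans hcb.symm)

/-- **Corollary 2.3.**  Let `Γ` be a finite connected graph with an edge, `G ≤ Aut Γ`
arc-transitive, and `B` a nontrivial block system for `G` on the vertices.  If `Γ` is
locally primitive for `G` and `val Γ = val Γ_B`, then `Γ` is a cover of `Γ_B`: for every
pair of adjacent blocks, each vertex of one block has exactly one neighbour in the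
other block. -/
theorem locally_primitive_cover {V : Type*} [Fintype V] (Γ : SimpleGraph V)
    (G : Type*) [Group G] [MulAction G V] [FaithfulSMul G V]
    (hact : ∀ (g : G) (a b : V), Γ.Adj (g • a) (g • b) ↔ Γ.Adj a b)
    (hconn : Γ.Connected) (hedge : ∃ a b : V, Γ.Adj a b)
    (harc : ∀ a b c d : V, Γ.Adj a b → Γ.Adj c d → ∃ g : G, g • a = c ∧ g • b = d)
    (B : Setoid V)
    (hinv : ∀ (g : G) (a b : V), B.r a b → B.r (g • a) (g • b))
    (hnt1 : ∃ a b : V, ¬ B.r a b)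
    (hnt2 : ∃ a b : V, a ≠ b ∧ B.r a b)
    (hlocprim : ∀ α : V,
      (∀ b c : V, Γ.Adj α b → Γ.Adj α c → ∃ g : G, g • α = α ∧ g • b = c) ∧
      (∀ T : Set V, T ⊆ Γ.neighborSet α →
        (∀ g : G, g • α = α →
          ((fun v => g • v) '' T = T ∨ Disjoint ((fun v => g • v) '' T) T)) →
        T.Subsingleton ∨ T = Γ.neighborSet α))
    (d : ℕ)
    (hvalG : ∀ v : V, (Γ.neighborSet v).ncard = d)
    (hvalQ : ∀ x : Quotient B, ((quotGraph Γ B).neighborSet x).ncard = d) :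
    ∀ a b : V, (quotGraph Γ B).Adj (Quotient.mk B a) (Quotient.mk B b) →
      ∃! c : V, B.r b c ∧ Γ.Adj a c :=
  locally_primitive_cover_general Γ G hact hconn harc B hinv hlocprim d hvalG hvalQ
end

section
/- Let G be a group, let L ≤ H be subgroups of G, and let g ∈ G with g ∉ H and g² ∈ L. Then: (1) the partition of G/L into the fibres of the natural projection G/L → G/H is a G-invariant partition (block system) for the left-multiplication action of G on G/L; and (2) for all x, y ∈ G with xH ≠ yH, the cosets xH and yH are adjacent in Cos(G,H,HgH) if and only if there exist h, h' ∈ H such that xhL is adjacent to yh'L in Cos(G,L,LgL). In other words, the quotient graph of Cos(G,L,LgL) with respect to this block system is the coset graph Cos(G,H,HgH). -/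
/-- membership of the double coset `H g H`. -/
def inDC {G : Type*} [Group G] (H : Subgroup G) (g z : G) : Prop :=
  ∃ h ∈ H, ∃ h' ∈ H, z = h * g * h'

/-- The coset graph `Cos(G,H,HgH)` on the coset space `G/H`: distinct cosets `xH` and `yH`
are adjacent iff `x⁻¹y ∈ HgH`.  (The symmetrised form of the adjacency relation below is
equal to this condition whenever `g² ∈ H`, since then `(HgH)⁻¹ = HgH`.) -/
def cosetGraph {G : Type*} [Group G] (H : Subgroup G) (g : G) : SimpleGraph (G ⧸ H) where
  Adj a b := a ≠ b ∧ ∃ x y : G, (x : G ⧸ H) = a ∧ (y : G ⧸ H) = b ∧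
      (inDC H g (x⁻¹ * y) ∨ inDC H g (y⁻¹ * x))
  symm := by
    constructor
    rintro a b ⟨hne, x, y, hx, hy, h⟩
    exact ⟨hne.symm, y, x, hy, hx, h.symm⟩
  loopless := by
    constructor
    rintro a ⟨hne, -⟩
    exact hne rfl

/-- The natural projection `G/L → G/H` for `L ≤ H`. -/
def cosetProj {G : Type*} [Group G] {L H : Subgroup G} (hLH : L ≤ H) : G ⧸ L → G ⧸ H :=
  Quotient.map' id (fun a b hab => by
    rw [QuotientGroup.leftRel_apply] at hab ⊢
    exact hLH hab)

/-! The double coset `HgH` is a union of left and right `H`-cosets and grows with `H`, so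
an edge `xL ~ yL` of `Cos(G,L,LgL)` projects to an edge `xH ~ yH` of `Cos(G,H,HgH)` (when
`xH ≠ yH`). Conversely, if `x⁻¹y = a g b` with `a, b ∈ H`, then `(xa)⁻¹(yb⁻¹) = g ∈ LgL`, so
the representatives `xa` and `yb⁻¹` of the fibres over `xH` and `yH` are adjacent in
`Cos(G,L,LgL)`. -/

section CosetGraph

variable {G : Type*} [Group G] {L H : Subgroup G} {g : G}

lemma inDC_self : inDC H g g :=
  ⟨1, H.one_mem, 1, H.one_mem, by simp⟩

lemma inDC_of_le (hLH : L ≤ H) {z : G} (hz : inDC L g z) : inDC H g z := by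
  obtain ⟨a, ha, b, hb, rfl⟩ := hz
  exact ⟨a, hLH ha, b, hLH hb, rfl⟩

lemma inDC_mul_mul {a b z : G} (ha : a ∈ H) (hb : b ∈ H) (hz : inDC H g z) :
    inDC H g (a * z * b) := by
  obtain ⟨c, hc, d, hd, rfl⟩ := hz
  exact ⟨a * c, H.mul_mem ha hc, d * b, H.mul_mem hd hb, by group⟩

lemma inDC_inv_mul_congr {x x' y y' : G} (hx : (x : G ⧸ H) = x') (hy : (y : G ⧸ H) = y')
    (hxy : inDC H g (x⁻¹ * y)) : inDC H g (x'⁻¹ * y') := by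
  rw [QuotientGroup.eq] at hx hy
  have key := inDC_mul_mul (H.inv_mem hx) hy hxy
  rwa [show (x⁻¹ * x')⁻¹ * (x⁻¹ * y) * (y⁻¹ * y') = x'⁻¹ * y' by group] at key

lemma cosetGraph_adj_mk_iff {x y : G} :
    (cosetGraph H g).Adj x y ↔
      (x : G ⧸ H) ≠ y ∧ (inDC H g (x⁻¹ * y) ∨ inDC H g (y⁻¹ * x)) := by
  refine ⟨?_, fun ⟨hne, hxy⟩ => ⟨hne, x, y, rfl, rfl, hxy⟩⟩
  rintro ⟨hne, x', y', hx, hy, hxy | hyx⟩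
  · exact ⟨hne, Or.inl (inDC_inv_mul_congr hx hy hxy)⟩
  · exact ⟨hne, Or.inr (inDC_inv_mul_congr hy hx hyx)⟩

lemma cosetProj_mk_mul_of_mem (hLH : L ≤ H) (a : G) {b : G} (hb : b ∈ H) :
    cosetProj hLH ((a * b : G) : G ⧸ L) = (a : G ⧸ H) :=
  QuotientGroup.mk_mul_of_mem a hb

lemma cosetProj_smul (hLH : L ≤ H) (z : G) (u : G ⧸ L) :
    cosetProj hLH (z • u) = z • cosetProj hLH u := by
  induction u using QuotientGroup.induction_on
  rfl

lemma cosetGraph_adj_cosetProj (hLH : L ≤ H) {u v : G ⧸ L} (huv : (cosetGraph L g).Adj u v)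
    (hne : cosetProj hLH u ≠ cosetProj hLH v) :
    (cosetGraph H g).Adj (cosetProj hLH u) (cosetProj hLH v) := by
  obtain ⟨-, x, y, rfl, rfl, hxy⟩ := huv
  exact (cosetGraph_adj_mk_iff).2 ⟨hne, hxy.imp (inDC_of_le hLH) (inDC_of_le hLH)⟩

lemma exists_cosetGraph_adj_of_inDC (hLH : L ≤ H) {x y : G} (hne : (x : G ⧸ H) ≠ y)
    (hxy : inDC H g (x⁻¹ * y)) : ∃ h ∈ H, ∃ h' ∈ H,
      (cosetGraph L g).Adj ((x * h : G) : G ⧸ L) ((y * h' : G) : G ⧸ L) := by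
  obtain ⟨a, ha, b, hb, hab⟩ := hxy
  refine ⟨a, ha, b⁻¹, H.inv_mem hb, (cosetGraph_adj_mk_iff).2 ⟨?_, Or.inl ?_⟩⟩
  · intro heq
    apply hne
    rw [← cosetProj_mk_mul_of_mem hLH x ha, ← cosetProj_mk_mul_of_mem hLH y (H.inv_mem hb), heq]
  · have hg : (x * a)⁻¹ * (y * b⁻¹) = g := by
      rw [mul_inv_rev, mul_assoc, ← mul_assoc x⁻¹, hab]
      group
    exact hg ▸ inDC_self

lemma exists_cosetGraph_adj_of_adj (hLH : L ≤ H) {x y : G}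
    (hxy : (cosetGraph H g).Adj x y) : ∃ h ∈ H, ∃ h' ∈ H,
      (cosetGraph L g).Adj ((x * h : G) : G ⧸ L) ((y * h' : G) : G ⧸ L) := by
  obtain ⟨hne, hxy | hyx⟩ := (cosetGraph_adj_mk_iff).1 hxy
  · exact exists_cosetGraph_adj_of_inDC hLH hne hxy
  · obtain ⟨h', hh', h, hh, hadj⟩ := exists_cosetGraph_adj_of_inDC hLH hne.symm hyx
    exact ⟨h, hh, h', hh', hadj.symm⟩

end CosetGraph

theorem cosetGraph_quotient_general {G : Type*} [Group G] (L H : Subgroup G) (hLH : L ≤ H)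
    (g : G) :
    (∀ (z : G) (u v : G ⧸ L),
        cosetProj hLH u = cosetProj hLH v → cosetProj hLH (z • u) = cosetProj hLH (z • v)) ∧
    (∀ x y : G, (x : G ⧸ H) ≠ (y : G ⧸ H) →
      ((cosetGraph H g).Adj (x : G ⧸ H) (y : G ⧸ H) ↔
        ∃ h ∈ H, ∃ h' ∈ H, (cosetGraph L g).Adj ((x * h : G) : G ⧸ L) ((y * h' : G) : G ⧸ L))) := by
  refine ⟨fun z u v huv => by rw [cosetProj_smul, cosetProj_smul, huv],
    fun x y hne => ⟨exists_cosetGraph_adj_of_adj hLH, ?_⟩⟩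
  rintro ⟨h, hh, h', hh', hadj⟩
  rw [← cosetProj_mk_mul_of_mem hLH x hh, ← cosetProj_mk_mul_of_mem hLH y hh'] at hne ⊢
  exact cosetGraph_adj_cosetProj hLH hadj hne

/-- **Proposition 2.2.**  Let `L ≤ H ≤ G` and `g ∈ G` with `g ∉ H` and `g² ∈ L`.  Then
(1) the fibres of the projection `G/L → G/H` form a `G`-invariant partition (block
system) of `G/L` for the left-multiplication action; and
(2) two distinct cosets `xH, yH` are adjacent in `Cos(G,H,HgH)` iff some pair of
representatives of the corresponding fibres, `xhL` and `yh'L` with `h, h' ∈ H`, is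
adjacent in `Cos(G,L,LgL)`; i.e. the quotient graph of `Cos(G,L,LgL)` modulo this block
system is `Cos(G,H,HgH)`. -/
theorem cosetGraph_quotient {G : Type*} [Group G] (L H : Subgroup G) (hLH : L ≤ H)
    (g : G) (hg : g ∉ H) (hg2 : g ^ 2 ∈ L) :
    (∀ (z : G) (u v : G ⧸ L),
        cosetProj hLH u = cosetProj hLH v → cosetProj hLH (z • u) = cosetProj hLH (z • v)) ∧
    (∀ x y : G, (x : G ⧸ H) ≠ (y : G ⧸ H) →
      ((cosetGraph H g).Adj (x : G ⧸ H) (y : G ⧸ H) ↔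
        ∃ h ∈ H, ∃ h' ∈ H, (cosetGraph L g).Adj ((x * h : G) : G ⧸ L) ((y * h' : G) : G ⧸ L))) :=
  cosetGraph_quotient_general L H hLH g
end

section
/- Let Σ be a finite simple graph that is regular of valency m ≥ 2, and let G ≤ Aut(Σ) be arc-transitive on Σ. Then there exist a finite simple graph Δ that is regular of valency m, a group acting on Δ by graph automorphisms and arc-transitively, and a block system B for this group on VΔ, such that: the quotient graph Δ_B is isomorphic to Σ, the graph Δ is disconnected, and Δ is not a cover of Δ_B (for some pair of adjacent blocks of B the induced subgraph of Δ between them is not a perfect matching). In particular, every arc-transitive finite graph that is not a perfect matching has a disconnected symmetric pseudocover. -/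
namespace SimpleGraph

variable {V V' : Type*}

def IsArcTransitive (S : SimpleGraph V) : Prop :=
  ∀ a b c d, S.Adj a b → S.Adj c d → ∃ φ : S ≃g S, φ a = c ∧ φ b = d

lemma isArcTransitive_of_smul {S : SimpleGraph V} {G : Type*} [Group G] [MulAction G V]
    (hact : ∀ (g : G) a b, S.Adj (g • a) (g • b) ↔ S.Adj a b)
    (harc : ∀ a b c d, S.Adj a b → S.Adj c d → ∃ g : G, g • a = c ∧ g • b = d) :
    S.IsArcTransitive := by
  intro a b c d hab hcd
  obtain ⟨g, ha, hb⟩ := harc a b c d hab hcd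
  exact ⟨⟨MulAction.toPerm g, hact g _ _⟩, ha, hb⟩

lemma IsArcTransitive.of_iso {S : SimpleGraph V} {T : SimpleGraph V'} (ψ : S ≃g T)
    (h : S.IsArcTransitive) : T.IsArcTransitive := by
  intro a b c d hab hcd
  obtain ⟨φ, ha, hb⟩ :=
    h _ _ _ _ (ψ.symm.map_adj_iff.2 hab) (ψ.symm.map_adj_iff.2 hcd)
  exact ⟨ψ.symm.trans (φ.trans ψ), by simp [ha], by simp [hb]⟩

def Iso.mapDart {S : SimpleGraph V} {T : SimpleGraph V'} (φ : S ≃g T) : S.Dart ≃ T.Dart where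
  toFun := φ.toHom.mapDart
  invFun := φ.symm.toHom.mapDart
  left_inv d := by ext <;> simp
  right_inv d := by ext <;> simp

lemma Iso.mapDart_symm {S : SimpleGraph V} {T : SimpleGraph V'} (φ : S ≃g T) (d : S.Dart) :
    φ.mapDart d.symm = (φ.mapDart d).symm := rfl

def autPreserving (Γ : SimpleGraph V) (B : Setoid V) : Subgroup (Equiv.Perm V) where
  carrier := {h | ∀ a b, (Γ.Adj (h a) (h b) ↔ Γ.Adj a b) ∧ (B.r (h a) (h b) ↔ B.r a b)}
  one_mem' _ _ := ⟨Iff.rfl, Iff.rfl⟩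
  mul_mem' hg hh a b := ⟨(hg _ _).1.trans (hh a b).1, (hg _ _).2.trans (hh a b).2⟩
  inv_mem' {h} hh a b := by
    simpa only [Equiv.Perm.coe_inv, Equiv.apply_symm_apply, Iff.comm] using hh (h⁻¹ a) (h⁻¹ b)

section DartBlowup

variable (S : SimpleGraph V) (m : ℕ)

def dartBlowup : SimpleGraph (S.Dart × Fin m) where
  Adj x y := x.1.symm = y.1
  symm := ⟨fun x y h => by simp [← h]⟩
  loopless := ⟨fun x h => x.1.symm_ne h⟩

def tailSetoid : Setoid (S.Dart × Fin m) := Setoid.ker fun x => x.1.fst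

variable {S m}

lemma dartBlowup_adj {x y : S.Dart × Fin m} : (S.dartBlowup m).Adj x y ↔ x.1.symm = y.1 :=
  Iff.rfl

lemma neighborSet_dartBlowup (x : S.Dart × Fin m) :
    (S.dartBlowup m).neighborSet x = Set.range fun k => (x.1.symm, k) := by
  ext y
  simp only [mem_neighborSet, dartBlowup_adj, Set.mem_range]
  exact ⟨fun h => ⟨y.2, by rw [h]⟩, by rintro ⟨k, rfl⟩; rfl⟩

lemma ncard_neighborSet_dartBlowup (x : S.Dart × Fin m) :
    ((S.dartBlowup m).neighborSet x).ncard = m := by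
  rw [neighborSet_dartBlowup, ← Set.image_univ,
    Set.ncard_image_of_injective _ (Prod.mk_right_injective _), Set.ncard_univ, Nat.card_fin]

lemma ncard_setOf_tailSetoid_and_adj {x y : S.Dart × Fin m} (hxy : (S.dartBlowup m).Adj x y) :
    {c | (tailSetoid S m).r y c ∧ (S.dartBlowup m).Adj x c}.ncard = m := by
  convert ncard_neighborSet_dartBlowup x using 2
  ext c
  refine and_iff_right_of_imp fun (hc : x.1.symm = c.1) => ?_
  change y.1.fst = c.1.fst
  rw [← hxy, ← hc]

lemma edge_eq_of_reachable_dartBlowup {x y : S.Dart × Fin m}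
    (h : (S.dartBlowup m).Reachable x y) : x.1.edge = y.1.edge := by
  obtain ⟨p⟩ := h
  induction p with
  | nil => rfl
  | cons hadj _ ih => rw [← ih, ← dartBlowup_adj.1 hadj, Dart.edge_symm]

lemma not_connected_dartBlowup (hm : 0 < m) {u v w : V} (hv : S.Adj u v) (hw : S.Adj u w)
    (hvw : v ≠ w) : ¬ (S.dartBlowup m).Connected := by
  intro hconn
  have hedge := edge_eq_of_reachable_dartBlowup <|
    hconn.preconnected (⟨⟨(u, v), hv⟩, ⟨0, hm⟩⟩ : S.Dart × Fin m) ⟨⟨(u, w), hw⟩, ⟨0, hm⟩⟩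
  exact hvw (Sym2.congr_right.1 hedge)

lemma quotGraph_dartBlowup_adj_mk {x y : S.Dart × Fin m} :
    (quotGraph (S.dartBlowup m) (tailSetoid S m)).Adj ⟦x⟧ ⟦y⟧ ↔ S.Adj x.1.fst y.1.fst := by
  constructor
  · rintro ⟨-, a, b, ha, hb, hab⟩
    have hax : a.1.fst = x.1.fst := Quotient.exact ha
    have hby : b.1.fst = y.1.fst := Quotient.exact hb
    rw [← hax, ← hby, ← dartBlowup_adj.1 hab]
    exact a.1.adj
  · intro h
    refine ⟨fun hxy => h.ne (Quotient.exact hxy), (⟨(x.1.fst, y.1.fst), h⟩, x.2),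
      (⟨(y.1.fst, x.1.fst), h.symm⟩, y.2), ?_, ?_, rfl⟩
    all_goals exact Quotient.sound rfl

noncomputable def quotGraphDartBlowupIso (hm : 0 < m) (hS : ∀ v, ∃ w, S.Adj v w) :
    quotGraph (S.dartBlowup m) (tailSetoid S m) ≃g S where
  toEquiv := Setoid.quotientKerEquivOfSurjective _ fun v =>
    let ⟨w, hvw⟩ := hS v
    ⟨(⟨(v, w), hvw⟩, ⟨0, hm⟩), rfl⟩
  map_rel_iff' {a b} := by
    induction a, b using Quotient.inductionOn₂
    exact quotGraph_dartBlowup_adj_mk.symm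

def liftAut (φ : S ≃g S) : Equiv.Perm (S.Dart × Fin m) :=
  φ.mapDart.prodCongr (Equiv.refl _)

lemma liftAut_mem (φ : S ≃g S) :
    liftAut φ ∈ autPreserving (S.dartBlowup m) (tailSetoid S m) := fun x y =>
  ⟨by simp only [liftAut, dartBlowup_adj, Equiv.prodCongr_apply, Prod.map_fst, ← Iso.mapDart_symm,
      φ.mapDart.injective.eq_iff],
    φ.injective.eq_iff⟩

def fiberPerm (f : S.Dart → Equiv.Perm (Fin m)) : Equiv.Perm (S.Dart × Fin m) :=
  Equiv.prodShear (Equiv.refl _) f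

lemma fiberPerm_mem (f : S.Dart → Equiv.Perm (Fin m)) :
    fiberPerm f ∈ autPreserving (S.dartBlowup m) (tailSetoid S m) := fun _ _ =>
  ⟨Iff.rfl, Iff.rfl⟩

lemma exists_mem_autPreserving_fixing_darts {d₁ d₂ : S.Dart} (hd : d₁ ≠ d₂)
    (i₁ j₁ i₂ j₂ : Fin m) : ∃ h ∈ autPreserving (S.dartBlowup m) (tailSetoid S m),
      h (d₁, i₁) = (d₁, j₁) ∧ h (d₂, i₂) = (d₂, j₂) := by
  classical
  refine ⟨fiberPerm fun d => if d = d₁ then Equiv.swap i₁ j₁ else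
    if d = d₂ then Equiv.swap i₂ j₂ else 1, fiberPerm_mem _, ?_, ?_⟩ <;>
  simp [fiberPerm, hd.symm]

lemma dartBlowup_arcTransitive (hS : S.IsArcTransitive) :
    ∀ x y z w : S.Dart × Fin m, (S.dartBlowup m).Adj x y → (S.dartBlowup m).Adj z w →
      ∃ h ∈ autPreserving (S.dartBlowup m) (tailSetoid S m), h x = z ∧ h y = w := by
  rintro ⟨d, i⟩ ⟨_, j⟩ ⟨e, k⟩ ⟨_, l⟩ (rfl : d.symm = _) (rfl : e.symm = _)
  obtain ⟨φ, hφ₁, hφ₂⟩ := hS _ _ _ _ d.adj e.adj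
  have hφ : φ.mapDart d = e := Dart.ext _ _ (Prod.ext hφ₁ hφ₂)
  obtain ⟨τ, hτ, hτe, hτe'⟩ := exists_mem_autPreserving_fixing_darts e.symm_ne.symm i k j l
  refine ⟨τ * liftAut φ, mul_mem hτ (liftAut_mem φ), ?_, ?_⟩
  · simp [liftAut, hφ, hτe]
  · simp [liftAut, Iso.mapDart_symm, hφ, hτe']

end DartBlowup

end SimpleGraph

open SimpleGraph

theorem disconnected_pseudocover_exists_general {V : Type*} [Fintype V] [Nonempty V]
    (Sg : SimpleGraph V) (m : ℕ) (hm : 2 ≤ m)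
    (hreg : ∀ v : V, (Sg.neighborSet v).ncard = m)
    (G : Type*) [Group G] [MulAction G V]
    (hact : ∀ (g : G) (a b : V), Sg.Adj (g • a) (g • b) ↔ Sg.Adj a b)
    (harc : ∀ a b c d : V, Sg.Adj a b → Sg.Adj c d → ∃ g : G, g • a = c ∧ g • b = d) :
    ∃ (W : Type) (_ : Fintype W) (Δ : SimpleGraph W) (B : Setoid W)
      (H : Subgroup (Equiv.Perm W)),
      (∀ h ∈ H, ∀ a b : W, Δ.Adj (h a) (h b) ↔ Δ.Adj a b) ∧
      (∀ a b c d : W, Δ.Adj a b → Δ.Adj c d → ∃ h ∈ H, h a = c ∧ h b = d) ∧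
      (∀ h ∈ H, ∀ a b : W, B.r a b → B.r (h a) (h b)) ∧
      (∀ w : W, (Δ.neighborSet w).ncard = m) ∧
      Nonempty ((quotGraph Δ B) ≃g Sg) ∧
      ¬ Δ.Connected ∧
      (∃ a b : W, (quotGraph Δ B).Adj (Quotient.mk B a) (Quotient.mk B b) ∧
        ({c : W | B.r b c ∧ Δ.Adj a c}).ncard ≠ 1) := by
  classical
  have htwo : ∀ v, ∃ u w, Sg.Adj v u ∧ Sg.Adj v w ∧ u ≠ w := fun v => by
    have h : 1 < (Sg.neighborSet v).ncard := by rw [hreg]; omega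
    simpa using (Set.one_lt_ncard_iff (Set.toFinite _)).1 h
  -- `W` has to live in `Type`, so `Sg` is first transported to `Fin (card V)`.
  let S := Sg.map (Fintype.equivFin V).toEmbedding
  let ψ : Sg ≃g S := Iso.map _ Sg
  have hS : ∀ v, ∃ w, S.Adj v w := fun v => by
    obtain ⟨u, -, hu, -⟩ := htwo (ψ.symm v)
    exact ⟨ψ u, by simpa using ψ.map_adj_iff.2 hu⟩
  obtain ⟨v₀⟩ := ‹Nonempty V›
  obtain ⟨u, w, hu, hw, huw⟩ := htwo v₀
  have hm₀ : 0 < m := by omega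
  let x : S.Dart × Fin m := (⟨(ψ v₀, ψ u), ψ.map_adj_iff.2 hu⟩, ⟨0, hm₀⟩)
  have hx : {c | (tailSetoid S m).r (x.1.symm, x.2) c ∧ (S.dartBlowup m).Adj x c}.ncard ≠ 1 := by
    rw [ncard_setOf_tailSetoid_and_adj (y := (x.1.symm, x.2)) rfl]
    omega
  refine ⟨_, Fintype.ofFinite _, _, tailSetoid S m, autPreserving _ _, fun _ hh a b => (hh a b).1,
    dartBlowup_arcTransitive ((isArcTransitive_of_smul hact harc).of_iso ψ),
    fun _ hh a b => (hh a b).2.2, ncard_neighborSet_dartBlowup,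
    ⟨(quotGraphDartBlowupIso hm₀ hS).trans ψ.symm⟩,
    not_connected_dartBlowup hm₀ (ψ.map_adj_iff.2 hu) (ψ.map_adj_iff.2 hw) (ψ.injective.ne huw),
    x, (x.1.symm, x.2), quotGraph_dartBlowup_adj_mk.2 x.1.adj, hx⟩

/-- **Proposition 2.6.**  Every finite arc-transitive graph `Sg` of valency `m ≥ 2`
(in particular, not a perfect matching) has a disconnected symmetric pseudocover:
there are a finite graph `Δ`, regular of valency `m`, a group of automorphisms of `Δ`
(realised as a subgroup of the permutations of the vertices preserving adjacency)
acting arc-transitively, and an invariant partition `B` of the vertices of `Δ`, such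
that the quotient graph of `Δ` by `B` is isomorphic to `Sg`, `Δ` is disconnected, and
`Δ` is not a cover of its quotient (for some pair of adjacent blocks and some vertex
of one of them, the number of its neighbours in the other block is not `1`). -/
theorem disconnected_pseudocover_exists {V : Type*} [Fintype V] [Nonempty V]
    (Sg : SimpleGraph V) (m : ℕ) (hm : 2 ≤ m)
    (hreg : ∀ v : V, (Sg.neighborSet v).ncard = m)
    (G : Type*) [Group G] [MulAction G V] [FaithfulSMul G V]
    (hact : ∀ (g : G) (a b : V), Sg.Adj (g • a) (g • b) ↔ Sg.Adj a b)
    (harc : ∀ a b c d : V, Sg.Adj a b → Sg.Adj c d → ∃ g : G, g • a = c ∧ g • b = d) :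
    ∃ (W : Type) (_ : Fintype W) (Δ : SimpleGraph W) (B : Setoid W)
      (H : Subgroup (Equiv.Perm W)),
      (∀ h ∈ H, ∀ a b : W, Δ.Adj (h a) (h b) ↔ Δ.Adj a b) ∧
      (∀ a b c d : W, Δ.Adj a b → Δ.Adj c d → ∃ h ∈ H, h a = c ∧ h b = d) ∧
      (∀ h ∈ H, ∀ a b : W, B.r a b → B.r (h a) (h b)) ∧
      (∀ w : W, (Δ.neighborSet w).ncard = m) ∧
      Nonempty ((quotGraph Δ B) ≃g Sg) ∧
      ¬ Δ.Connected ∧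
      (∃ a b : W, (quotGraph Δ B).Adj (Quotient.mk B a) (Quotient.mk B b) ∧
        ({c : W | B.r b c ∧ Δ.Adj a c}).ncard ≠ 1) :=
  disconnected_pseudocover_exists_general Sg m hm hreg G hact harc
end

section
/- Let G be a group, g ∈ G, n ≥ 2 an integer, and let H₁ ≤ H₂ ≤ … ≤ Hₙ be a chain of finite subgroups of G with g² ∈ H₁. Assume that all the indices |Hᵢ : Hᵢ ∩ Hᵢ^g| for 1 ≤ i ≤ n are equal. Then H₁ ∩ Hₙ^g = H₁ ∩ H₁^g if and only if Hᵢ ∩ H_{i+1}^g = Hᵢ ∩ Hᵢ^g for every 1 ≤ i ≤ n−1. -/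
/-!
If `A ≤ B` and `K` has the same finite index in `A` as in `B`, then `A` acts transitively on
the cosets of `K` in `B`, i.e. `B = A (B ∩ K)`. Along the chain, `H₀ ∩ Hₙ^g = H₀ ∩ H₀^g`
squeezes `H₀ ∩ Hᵢ^g` to `H₀ ∩ H₀^g`, so `Hᵢ^g` has the same index in `H₀` as in `Hᵢ`.
Writing `x ∈ Hᵢ ∩ Hᵢ₊₁^g` as `x = a k` with `a ∈ H₀` and `k ∈ Hᵢ^g` puts `a` in
`H₀ ∩ Hᵢ₊₁^g ≤ Hᵢ^g`, hence `x ∈ Hᵢ^g`. Conversely, the single steps telescope.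
-/

namespace Subgroup

variable {G : Type*} [Group G] {A B K L : Subgroup G}

theorem exists_inv_mul_mem_of_relIndex_eq (hAB : A ≤ B) (hB : K.relIndex B ≠ 0)
    (h : K.relIndex A = K.relIndex B) {x : G} (hx : x ∈ B) : ∃ a ∈ A, a⁻¹ * x ∈ K := by
  have : Finite (B ⧸ K.subgroupOf B) := Nat.finite_of_card_ne_zero hB
  have hbij : Function.Bijective (quotientSubgroupOfEmbeddingOfLE K hAB) :=
    (Nat.bijective_iff_injective_and_card _).mpr
      ⟨(quotientSubgroupOfEmbeddingOfLE K hAB).injective, h⟩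
  obtain ⟨y, hy⟩ := hbij.2 (QuotientGroup.mk ⟨x, hx⟩)
  obtain ⟨a, rfl⟩ := QuotientGroup.mk_surjective y
  rw [quotientSubgroupOfEmbeddingOfLE_apply_mk, QuotientGroup.eq] at hy
  exact ⟨a, a.2, hy⟩

theorem inf_le_of_relIndex_eq (hAB : A ≤ B) (hKL : K ≤ L) (hB : K.relIndex B ≠ 0)
    (h : K.relIndex A = K.relIndex B) (hAL : A ⊓ L ≤ K) : B ⊓ L ≤ K := by
  rintro x ⟨hxB, hxL⟩
  obtain ⟨a, haA, hk⟩ := exists_inv_mul_mem_of_relIndex_eq hAB hB h hxB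
  have haL : a ∈ L := by
    simpa using L.mul_mem hxL (L.inv_mem (hKL hk))
  simpa using K.mul_mem (hAL ⟨haA, haL⟩) hk

theorem relIndex_eq_of_inf_eq (h : K ⊓ A = L ⊓ A) : K.relIndex A = L.relIndex A := by
  rw [← inf_relIndex_right, h, inf_relIndex_right]

end Subgroup

section ConjChain

variable {G : Type*} [Group G] {A B C : Subgroup G} {g : G}

theorem conjSG_mono_s10 (h : A ≤ B) (g : G) : conjSG A g ≤ conjSG B g := fun _ hx => h hx

theorem inf_conjSG_eq_of_le_of_le (hAB : A ≤ B) (hBC : B ≤ C)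
    (h : A ⊓ conjSG C g = A ⊓ conjSG A g) : A ⊓ conjSG B g = A ⊓ conjSG A g :=
  le_antisymm (h ▸ inf_le_inf_left _ (conjSG_mono_s10 hBC g))
    (inf_le_inf_left _ (conjSG_mono_s10 hAB g))

theorem inf_conjSG_trans (hAB : A ≤ B) (hA : A ⊓ conjSG B g = A ⊓ conjSG A g)
    (hB : B ⊓ conjSG C g = B ⊓ conjSG B g) : A ⊓ conjSG C g = A ⊓ conjSG A g := by
  rw [← inf_eq_left.mpr hAB, inf_assoc, hB, ← inf_assoc, inf_eq_left.mpr hAB, hA]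

theorem inf_conjSG_eq_of_relIndex_eq (hAB : A ≤ B) (hBC : B ≤ C) (hB : (B : Set G).Finite)
    (hidx : (conjSG B g).relIndex B = (conjSG A g).relIndex A)
    (h : A ⊓ conjSG C g = A ⊓ conjSG A g) : B ⊓ conjSG C g = B ⊓ conjSG B g := by
  have : Finite B := hB.to_subtype
  refine le_antisymm (le_inf inf_le_left ?_) (inf_le_inf_left _ (conjSG_mono_s10 hBC g))
  refine Subgroup.inf_le_of_relIndex_eq hAB (conjSG_mono_s10 hBC g) Subgroup.index_ne_zero_of_finite
    ?_ (h ▸ inf_le_right.trans (conjSG_mono_s10 hAB g))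
  rw [hidx]
  exact Subgroup.relIndex_eq_of_inf_eq <| by
    rw [inf_comm, inf_conjSG_eq_of_le_of_le hAB hBC h, inf_comm]

end ConjChain

theorem chain_cover_criterion_general {G : Type*} [Group G] (n : ℕ)
    (H : ℕ → Subgroup G) (hfin : ∀ i, i < n → ((H i : Set G)).Finite)
    (hchain : ∀ i, i + 1 < n → H i ≤ H (i + 1))
    (g : G)
    (hval : ∀ i, i < n → (conjSG (H i) g).relIndex (H i) = (conjSG (H 0) g).relIndex (H 0)) :
    H 0 ⊓ conjSG (H (n - 1)) g = H 0 ⊓ conjSG (H 0) g ↔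
      ∀ i, i + 1 < n → H i ⊓ conjSG (H (i + 1)) g = H i ⊓ conjSG (H i) g := by
  have hmono : MonotoneOn H (Set.Iio n) :=
    monotoneOn_of_le_succ Set.ordConnected_Iio fun i _ _ hi => hchain i hi
  have hle : ∀ i j, i ≤ j → j < n → H i ≤ H j := fun i j hij hj =>
    hmono (Set.mem_Iio.mpr (hij.trans_lt hj)) (Set.mem_Iio.mpr hj) hij
  constructor
  · intro h i hi
    exact inf_conjSG_eq_of_relIndex_eq (hle 0 i i.zero_le (by omega)) (hchain i hi)
      (hfin i (by omega)) (hval i (by omega))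
      (inf_conjSG_eq_of_le_of_le (hle 0 (i + 1) (by omega) hi) (hle _ _ (by omega) (by omega)) h)
  · intro h
    have hprefix : ∀ j ≤ n - 1, H 0 ⊓ conjSG (H j) g = H 0 ⊓ conjSG (H 0) g := by
      intro j hj
      induction j with
      | zero => rfl
      | succ j ih =>
        exact inf_conjSG_trans (hle 0 j j.zero_le (by omega)) (ih (by omega)) (h j (by omega))
    exact hprefix (n - 1) le_rfl

/-- **Lemma 3.2 (chain lemma, group-theoretic form).**
Let `H 0 ≤ H 1 ≤ ⋯ ≤ H (n-1)` be a chain of finite subgroups of `G` (here `n ≥ 2`),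
let `g ∈ G` with `g² ∈ H 0`, and suppose all the indices `|H i : H i ∩ (H i)^g|` are
equal.  Then `H 0 ∩ (H (n-1))^g = H 0 ∩ (H 0)^g` if and only if
`H i ∩ (H (i+1))^g = H i ∩ (H i)^g` for every `i` with `i + 1 < n`. -/
theorem chain_cover_criterion {G : Type*} [Group G] (n : ℕ) (hn : 2 ≤ n)
    (H : ℕ → Subgroup G) (hfin : ∀ i, i < n → ((H i : Set G)).Finite)
    (hchain : ∀ i, i + 1 < n → H i ≤ H (i + 1))
    (g : G) (hg2 : g ^ 2 ∈ H 0)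
    (hval : ∀ i, i < n → (conjSG (H i) g).relIndex (H i) = (conjSG (H 0) g).relIndex (H 0)) :
    H 0 ⊓ conjSG (H (n - 1)) g = H 0 ⊓ conjSG (H 0) g ↔
      ∀ i, i + 1 < n → H i ⊓ conjSG (H (i + 1)) g = H i ⊓ conjSG (H i) g :=
  chain_cover_criterion_general n H hfin hchain g hval
end

section
/- Let Σ be a finite connected simple graph that is regular of valency 4, let G ≤ Aut(Σ) be arc-transitive on Σ, and let (ω, ω') be an ordered pair of adjacent vertices. Assume the vertex stabilizer G_ω is a (finite) 2-group. Then either (i) the image of G_ω in the symmetric group on the neighbour set Σ(ω) is isomorphic to the dihedral group of order 8, and the image of the arc stabilizer G_{ωω'} = G_ω ∩ G_{ω'} in the symmetric group on Σ(ω) has order 2; or (ii) G_ω is isomorphic to Z₂ × Z₂ or to Z₄. -/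
/-!
The local action `L` of `G_ω` on `Σ(ω)` is a transitive 2-subgroup of `Sym(4)`, so
`|L| = 4 · |L_ω'|` divides `24`. If the arc stabilizer `G_ωω'` moves a neighbour of `ω`, then
`L_ω'` is a nontrivial 2-group of order dividing `6`, so `|L_ω'| = 2` and `|L| = 8`: `L` is a
Sylow 2-subgroup of `Sym(4)`, hence dihedral like the symmetry group of a square.
Otherwise `G_ωω'` fixes `Σ(ω)` pointwise; by arc-transitivity the same holds at every arc, so
walking outwards from `ω` an element of `G_ωω'` fixes every vertex and is trivial by
faithfulness. Then `G_ω` acts regularly on `Σ(ω)`, so it has order `4`.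
-/

open Equiv MulAction

namespace DihedralGroup

/-- The symmetries of the regular `n`-gon with vertex set `ZMod n`. -/
def toPermZMod (n : ℕ) : DihedralGroup n →* Perm (ZMod n) where
  toFun
    | r i => Equiv.subRight i
    | sr i => Equiv.subLeft i
  map_one' := by rw [one_def]; ext x; simp
  map_mul' := by
    rintro (i | i) (j | j) <;> ext x <;> simp <;> abel

theorem toPermZMod_injective {n : ℕ} (hn : 2 < n) : Function.Injective (toPermZMod n) := by
  refine (injective_iff_map_eq_one _).mpr ?_
  rintro (i | i) h
  · have hi : i = 0 := by simpa [toPermZMod] using Equiv.congr_fun h 0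
    rw [hi, r_zero]
  · have h0 : i = 0 := by simpa [toPermZMod] using Equiv.congr_fun h 0
    have h1 : i - 1 = 1 := Equiv.congr_fun h 1
    have h2 : ((2 : ℕ) : ZMod n) = 0 := by
      push_cast
      linear_combination h0 - h1
    exact absurd (Nat.le_of_dvd two_pos ((ZMod.natCast_eq_zero_iff _ _).mp h2)) (by omega)

end DihedralGroup

theorem MulAction.card_eq_card_mul_card_stabilizer (G : Type*) {X : Type*} [Group G]
    [MulAction G X] [IsPretransitive G X] (x : X) :
    Nat.card G = Nat.card X * Nat.card (stabilizer G x) := by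
  rw [← (stabilizer G x).index_mul_card, index_stabilizer_of_transitive]

namespace Equiv.Perm

variable {A : Type*} [Finite A]

theorem card_perm_of_card_eq_four (hA : Nat.card A = 4) : Nat.card (Perm A) = 24 := by
  rw [Nat.card_perm, hA]; rfl

theorem not_two_dvd_index_of_card_eq_eight (hA : Nat.card A = 4) {H : Subgroup (Perm A)}
    (hH : Nat.card H = 8) : ¬ 2 ∣ H.index := by
  have := H.index_mul_card
  rw [hH, card_perm_of_card_eq_four hA] at this
  omega

theorem nonempty_mulEquiv_of_card_eq_eight (hA : Nat.card A = 4) {H K : Subgroup (Perm A)}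
    (hH : Nat.card H = 8) (hK : Nat.card K = 8) : Nonempty (H ≃* K) :=
  ⟨Sylow.equiv ((IsPGroup.of_card (n := 3) hH).toSylow (not_two_dvd_index_of_card_eq_eight hA hH))
    ((IsPGroup.of_card (n := 3) hK).toSylow (not_two_dvd_index_of_card_eq_eight hA hK))⟩

theorem nonempty_mulEquiv_dihedralGroup_four (hA : Nat.card A = 4) {H : Subgroup (Perm A)}
    (hH : Nat.card H = 8) : Nonempty (H ≃* DihedralGroup 4) := by
  let e : A ≃ ZMod 4 := Finite.equivFinOfCardEq hA
  let ψ : DihedralGroup 4 →* Perm A :=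
    (permCongrHom e.symm).toMonoidHom.comp (DihedralGroup.toPermZMod 4)
  have hψ : Function.Injective ψ :=
    (permCongrHom e.symm).injective.comp (DihedralGroup.toPermZMod_injective (by norm_num))
  have hcard : Nat.card ψ.range = 8 := by
    rw [← Nat.card_congr (MonoidHom.ofInjective hψ).toEquiv, DihedralGroup.nat_card]
  obtain ⟨f⟩ := nonempty_mulEquiv_of_card_eq_eight hA hH hcard
  exact ⟨f.trans (MonoidHom.ofInjective hψ).symm⟩

theorem card_stabilizer_eq_two (hA : Nat.card A = 4) {H : Subgroup (Perm A)} (hH : IsPGroup 2 H)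
    [IsPretransitive H A] {a : A} (ha : stabilizer H a ≠ ⊥) :
    Nat.card (stabilizer H a) = 2 := by
  have hdvd : 4 * Nat.card (stabilizer H a) ∣ 24 := by
    rw [← hA, ← card_eq_card_mul_card_stabilizer, ← card_perm_of_card_eq_four hA]
    exact H.card_subgroup_dvd_card
  obtain ⟨k, hk⟩ := IsPGroup.iff_card.mp (hH.to_subgroup (stabilizer H a))
  have hk0 : k ≠ 0 := by
    rintro rfl
    exact ha (Subgroup.card_eq_one.mp hk)
  have hk1 : k < 2 := by
    by_contra! h
    have : 4 * 2 ^ 2 ∣ 24 := dvd_trans (hk ▸ Nat.mul_dvd_mul_left 4 (Nat.pow_dvd_pow 2 h)) hdvd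
    norm_num at this
  rw [hk, show k = 1 by omega, pow_one]

end Equiv.Perm

theorem nonempty_mulEquiv_of_card_eq_four {S : Type*} [Group S] (h : Nat.card S = 4) :
    Nonempty (S ≃* Multiplicative (ZMod 2 × ZMod 2)) ∨
      Nonempty (S ≃* Multiplicative (ZMod 4)) := by
  by_cases hcyc : IsCyclic S
  · exact Or.inr ⟨mulEquivOfCyclicCardEq (by simp [h])⟩
  · have hexp := (not_isCyclic_iff_exponent_eq_prime Nat.prime_two (by rw [h]; rfl)).mp hcyc
    have : IsKleinFour S := ⟨h, hexp⟩
    exact Or.inl IsKleinFour.nonempty_mulEquiv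

namespace SimpleGraph

variable {V : Type*} {Sg : SimpleGraph V}

theorem Connected.apply_eq_self_of_fixes_edge {f : V → V} (hconn : Sg.Connected)
    (hloc : ∀ v u, Sg.Adj v u → f v = v → f u = u → ∀ w, Sg.Adj v w → f w = w)
    {a b : V} (hab : Sg.Adj a b) (ha : f a = a) (hb : f b = b) (v : V) : f v = v := by
  let FixesStar (x : V) : Prop := f x = x ∧ ∀ w, Sg.Adj x w → f w = w
  have hwalk : ∀ {x y : V} (p : Sg.Walk x y), FixesStar x → FixesStar y := by
    intro x y p
    induction p with
    | nil => exact id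
    | cons hxz _ ih =>
      rintro ⟨hx, hnbr⟩
      have hz := hnbr _ hxz
      exact ih ⟨hz, hloc _ _ hxz.symm hz hx⟩
  obtain ⟨p⟩ := hconn.preconnected a v
  exact (hwalk p ⟨ha, hloc a b hab ha hb⟩).1

variable {G : Type*} [Group G] [MulAction G V] {ω ω' : V}

variable (Sg G) in
def ArcStabilizerFixesNeighbors (v u : V) : Prop :=
  ∀ g : G, g • v = v → g • u = u → ∀ w, Sg.Adj v w → g • w = w

theorem ArcStabilizerFixesNeighbors.of_arcTransitive
    (hact : ∀ (g : G) (a b : V), Sg.Adj (g • a) (g • b) ↔ Sg.Adj a b)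
    (harc : ∀ a b c d : V, Sg.Adj a b → Sg.Adj c d → ∃ g : G, g • a = c ∧ g • b = d)
    (hadj : Sg.Adj ω ω') (hbase : Sg.ArcStabilizerFixesNeighbors G ω ω')
    {v u : V} (hvu : Sg.Adj v u) : Sg.ArcStabilizerFixesNeighbors G v u := by
  intro g hv hu w hw
  obtain ⟨h, rfl, rfl⟩ := harc v u ω ω' hvu hadj
  have hfix := hbase (h * g * h⁻¹) (by simp [mul_smul, hv]) (by simp [mul_smul, hu])
    (h • w) ((hact h v w).mpr hw)
  simpa only [mul_smul, inv_smul_smul, smul_left_cancel_iff] using hfix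

theorem ArcStabilizerFixesNeighbors.eq_one [FaithfulSMul G V]
    (hact : ∀ (g : G) (a b : V), Sg.Adj (g • a) (g • b) ↔ Sg.Adj a b)
    (harc : ∀ a b c d : V, Sg.Adj a b → Sg.Adj c d → ∃ g : G, g • a = c ∧ g • b = d)
    (hconn : Sg.Connected) (hadj : Sg.Adj ω ω') (hbase : Sg.ArcStabilizerFixesNeighbors G ω ω')
    {g : G} (hω : g • ω = ω) (hω' : g • ω' = ω') : g = 1 :=
  eq_of_smul_eq_smul fun v => by
    rw [one_smul]
    exact hconn.apply_eq_self_of_fixes_edge (f := (g • ·))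
      (fun _ _ hvu => hbase.of_arcTransitive hact harc hadj hvu g) hadj hω hω' v

theorem orbit_stabilizer_eq_neighborSet
    (hact : ∀ (g : G) (a b : V), Sg.Adj (g • a) (g • b) ↔ Sg.Adj a b)
    (harc : ∀ a b c d : V, Sg.Adj a b → Sg.Adj c d → ∃ g : G, g • a = c ∧ g • b = d)
    (hadj : Sg.Adj ω ω') : orbit (stabilizer G ω) ω' = Sg.neighborSet ω := by
  ext w
  constructor
  · rintro ⟨g, rfl⟩
    have hgω : (g : G) • ω = ω := g.2
    have hgω' := (hact g ω ω').mpr hadj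
    rw [hgω] at hgω'
    exact hgω'
  · intro hw
    obtain ⟨g, hgω, hgw⟩ := harc ω ω' ω w hadj hw
    exact ⟨⟨g, hgω⟩, hgw⟩

theorem ArcStabilizerFixesNeighbors.card_stabilizer [FaithfulSMul G V]
    (hact : ∀ (g : G) (a b : V), Sg.Adj (g • a) (g • b) ↔ Sg.Adj a b)
    (harc : ∀ a b c d : V, Sg.Adj a b → Sg.Adj c d → ∃ g : G, g • a = c ∧ g • b = d)
    (hconn : Sg.Connected) (hadj : Sg.Adj ω ω') (hbase : Sg.ArcStabilizerFixesNeighbors G ω ω') :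
    Nat.card (stabilizer G ω) = (Sg.neighborSet ω).ncard := by
  have harcStab : stabilizer (stabilizer G ω) ω' = ⊥ :=
    (Subgroup.eq_bot_iff_forall _).mpr fun g hg =>
      Subtype.ext <| hbase.eq_one hact harc hconn hadj g.2 hg
  rw [← (stabilizer (stabilizer G ω) ω').index_mul_card, index_stabilizer,
    orbit_stabilizer_eq_neighborSet hact harc hadj, harcStab, Subgroup.card_bot, mul_one]

section LocalAction

variable {φ : stabilizer G ω →* Perm {v : V // Sg.Adj ω v}}

theorem isPretransitive_range_of_arcTransitive
    (hφ : ∀ (g : stabilizer G ω) (v : {v : V // Sg.Adj ω v}), (φ g v : V) = (g : G) • (v : V))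
    (harc : ∀ a b c d : V, Sg.Adj a b → Sg.Adj c d → ∃ g : G, g • a = c ∧ g • b = d) :
    IsPretransitive φ.range {v : V // Sg.Adj ω v} := by
  refine ⟨fun a b => ?_⟩
  obtain ⟨g, hgω, hgb⟩ := harc ω a ω b a.2 b.2
  exact ⟨⟨φ ⟨g, hgω⟩, _, rfl⟩, Subtype.ext ((hφ _ a).trans hgb)⟩

theorem image_arcStabilizer_eq
    (hφ : ∀ (g : stabilizer G ω) (v : {v : V // Sg.Adj ω v}), (φ g v : V) = (g : G) • (v : V))
    (hadj : Sg.Adj ω ω') :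
    ⇑φ '' {g | (g : G) ∈ stabilizer G ω'} =
      Subtype.val '' (stabilizer φ.range (⟨ω', hadj⟩ : {v : V // Sg.Adj ω v}) : Set φ.range) := by
  ext σ
  constructor
  · rintro ⟨g, hg, rfl⟩
    exact ⟨⟨φ g, g, rfl⟩, Subtype.ext ((hφ g _).trans hg), rfl⟩
  · rintro ⟨⟨_, g, rfl⟩, hfix, rfl⟩
    exact ⟨g, (hφ g _).symm.trans (congrArg Subtype.val hfix), rfl⟩

theorem stabilizer_range_ne_bot
    (hφ : ∀ (g : stabilizer G ω) (v : {v : V // Sg.Adj ω v}), (φ g v : V) = (g : G) • (v : V))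
    (hadj : Sg.Adj ω ω') (hnot : ¬ Sg.ArcStabilizerFixesNeighbors G ω ω') :
    stabilizer φ.range (⟨ω', hadj⟩ : {v : V // Sg.Adj ω v}) ≠ ⊥ := by
  obtain ⟨k, hkω, hkω', w, hw, hkw⟩ : ∃ k : G, k • ω = ω ∧ k • ω' = ω' ∧
      ∃ w, Sg.Adj ω w ∧ k • w ≠ w := by
    simpa [ArcStabilizerFixesNeighbors] using hnot
  intro hbot
  have hmem : (⟨φ ⟨k, hkω⟩, _, rfl⟩ : φ.range) ∈ stabilizer φ.range
      (⟨ω', hadj⟩ : {v : V // Sg.Adj ω v}) :=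
    Subtype.ext ((hφ _ _).trans hkω')
  rw [hbot, Subgroup.mem_bot] at hmem
  have hkw' := congrArg (fun σ : φ.range => ((σ : Perm {v : V // Sg.Adj ω v}) ⟨w, hw⟩ : V)) hmem
  exact hkw (by simpa only [hφ, OneMemClass.coe_one, Perm.coe_one, id_eq] using hkw')

end LocalAction

end SimpleGraph

theorem tetravalent_stabilizer_structure_general {V : Type*} (Sg : SimpleGraph V)
    {G : Type*} [Group G] [MulAction G V] [FaithfulSMul G V]
    (hact : ∀ (g : G) (a b : V), Sg.Adj (g • a) (g • b) ↔ Sg.Adj a b)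
    (hconn : Sg.Connected)
    (hval : ∀ v : V, (Sg.neighborSet v).ncard = 4)
    (harc : ∀ a b c d : V, Sg.Adj a b → Sg.Adj c d → ∃ g : G, g • a = c ∧ g • b = d)
    (ω ω' : V) (hadj : Sg.Adj ω ω')
    (h2 : IsPGroup 2 (MulAction.stabilizer G ω)) :
    (∀ φ : (MulAction.stabilizer G ω) →* Equiv.Perm {v : V // Sg.Adj ω v},
      (∀ (g : MulAction.stabilizer G ω) (v : {v : V // Sg.Adj ω v}),
          ((φ g v : {v : V // Sg.Adj ω v}) : V) = (g : G) • (v : V)) →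
      (Nonempty (φ.range ≃* DihedralGroup 4) ∧
        Nat.card
          (⇑φ '' {g : MulAction.stabilizer G ω | (g : G) ∈ MulAction.stabilizer G ω'}) = 2)) ∨
    Nonempty (MulAction.stabilizer G ω ≃* Multiplicative (ZMod 2 × ZMod 2)) ∨
    Nonempty (MulAction.stabilizer G ω ≃* Multiplicative (ZMod 4)) := by
  have hA : Nat.card {v : V // Sg.Adj ω v} = 4 := (Nat.card_coe_set_eq _).trans (hval ω)
  have : Finite {v : V // Sg.Adj ω v} := Nat.finite_of_card_ne_zero (by rw [hA]; norm_num)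
  by_cases hbase : Sg.ArcStabilizerFixesNeighbors G ω ω'
  · exact Or.inr (nonempty_mulEquiv_of_card_eq_four
      ((hbase.card_stabilizer hact harc hconn hadj).trans (hval ω)))
  refine Or.inl fun φ hφ => ?_
  have := SimpleGraph.isPretransitive_range_of_arcTransitive hφ harc
  have hstab := Perm.card_stabilizer_eq_two hA (h2.of_surjective _ φ.rangeRestrict_surjective)
    (SimpleGraph.stabilizer_range_ne_bot hφ hadj hbase)
  refine ⟨Perm.nonempty_mulEquiv_dihedralGroup_four hA ?_, ?_⟩
  · rw [card_eq_card_mul_card_stabilizer φ.range (⟨ω', hadj⟩ : {v : V // Sg.Adj ω v}), hA, hstab]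
  · rw [SimpleGraph.image_arcStabilizer_eq hφ hadj,
      Nat.card_image_of_injective Subtype.val_injective]
    exact hstab

/-- **Lemma 5.1.**  Let `Sg` be a finite connected tetravalent graph, `G ≤ Aut Sg`
arc-transitive, `(ω, ω')` an arc, and suppose the vertex stabilizer `G_ω` is a
`2`-group.  Then either the permutation group induced by `G_ω` on the neighbourhood
`Sg(ω)` (i.e. the range of the natural restriction homomorphism `φ`) is dihedral of
order `8` and the induced image of the arc stabilizer `G_{ωω'}` has order `2`, or
`G_ω ≅ ℤ₂ × ℤ₂` or `G_ω ≅ ℤ₄`. -/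
theorem tetravalent_stabilizer_structure {V : Type*} [Fintype V] (Sg : SimpleGraph V)
    {G : Type*} [Group G] [MulAction G V] [FaithfulSMul G V]
    (hact : ∀ (g : G) (a b : V), Sg.Adj (g • a) (g • b) ↔ Sg.Adj a b)
    (hconn : Sg.Connected)
    (hval : ∀ v : V, (Sg.neighborSet v).ncard = 4)
    (harc : ∀ a b c d : V, Sg.Adj a b → Sg.Adj c d → ∃ g : G, g • a = c ∧ g • b = d)
    (ω ω' : V) (hadj : Sg.Adj ω ω')
    (h2 : IsPGroup 2 (MulAction.stabilizer G ω)) :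
    (∀ φ : (MulAction.stabilizer G ω) →* Equiv.Perm {v : V // Sg.Adj ω v},
      (∀ (g : MulAction.stabilizer G ω) (v : {v : V // Sg.Adj ω v}),
          ((φ g v : {v : V // Sg.Adj ω v}) : V) = (g : G) • (v : V)) →
      (Nonempty (φ.range ≃* DihedralGroup 4) ∧
        Nat.card
          (⇑φ '' {g : MulAction.stabilizer G ω | (g : G) ∈ MulAction.stabilizer G ω'}) = 2)) ∨
    Nonempty (MulAction.stabilizer G ω ≃* Multiplicative (ZMod 2 × ZMod 2)) ∨
    Nonempty (MulAction.stabilizer G ω ≃* Multiplicative (ZMod 4)) :=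
  tetravalent_stabilizer_structure_general Sg hact hconn hval harc ω ω' hadj h2
end

section
/- Let Σ be a finite connected simple graph that is regular of valency 4, let G ≤ Aut(Σ) be arc-transitive on Σ, let (ω, ω') be an ordered pair of adjacent vertices, and let g ∈ G satisfy g·ω = ω' and g·ω' = ω. Assume the vertex stabilizer G_ω is a (finite) 2-group with |G_ω| ≥ 16. Then: (a) G_ω^{[1]} ∩ G_{ω'}^{[1]} is a normal subgroup of index 4 in the arc stabilizer G_{ωω'}, and the quotient G_{ωω'}/(G_ω^{[1]} ∩ G_{ω'}^{[1]}) is isomorphic to Z₂ × Z₂; (b) there exist x ∈ G_ω \ G_{ωω'} and y ∈ G_{ω'}^{[1]} \ G_ω^{[1]} such that G_ω = ⟨G_{ωω'}, x⟩ = ⟨G_ω^{[1]}, x, y⟩, G_ω^{[1]} = ⟨G_ω^{[1]} ∩ G_{ω'}^{[1]}, g⁻¹yg⟩, (xy)² ∈ G_ω^{[1]}, and the quotient G_ω/G_ω^{[1]} is dihedral of order 8, generated by the images of x and y; (c) there exists g̃ ∈ G_ω g G_ω such that G_ω g̃ G_ω = G_ω g G_ω, g̃·ω = ω', g̃·ω'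 = ω, and g̃² ∈ G_ω^{[1]}. -/
/-!
The local action `ρ_v : G_v → Sym(Σ(v)) ≅ S₄` has kernel `G_v^{[1]}`. As `G_v` is a 2-group, an
element fixing a neighbour of `v` acts as the identity or a transposition, so the sign of `ρ_v`
cuts out `G_v^{[1]}` in the arc stabilizer with index at most 2.

If `G_{ω'}^{[1]} ≤ G_ω^{[1]}`, arc-transitivity and connectivity make `G_ω^{[1]}` fix every
vertex, so `G_ω` embeds in `S₄` and has order at most 8. Hence there is
`y ∈ G_{ω'}^{[1]} \ G_ω^{[1]}`, and then `g⁻¹ y g ∈ G_ω^{[1]} \ G_{ω'}^{[1]}`; the signs at `ω`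
and `ω'` map `G_{ωω'}` onto `ℤ₂ × ℤ₂` with kernel `G_ω^{[1]} ∩ G_{ω'}^{[1]}`. The image of `G_ω` in
`S₄` has order `4 · 2 = 8` and contains the image of `y` as a non-central involution, so it is
dihedral. Finally `g̃` is `g` or `y g`, according to whether `g²` lies in `G_ω^{[1]}`.
-/

/-- The pointwise stabilizer `G_ω^{[1]}` of the neighbourhood of `ω` within the vertex
stabilizer `G_ω`: the subgroup of elements fixing `ω` and all of its neighbours. -/
def pstab {V : Type*} (Sg : SimpleGraph V) (G : Type*) [Group G] [MulAction G V] (ω : V) :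
    Subgroup G :=
  MulAction.stabilizer G ω ⊓ ⨅ v ∈ Sg.neighborSet ω, MulAction.stabilizer G v

open MulAction

theorem inDC_mul_left_iff {G : Type*} [Group G] {H : Subgroup G} {h : G} (hh : h ∈ H) (g z : G) :
    inDC H (h * g) z ↔ inDC H g z := by
  constructor
  · rintro ⟨a, ha, b, hb, rfl⟩
    exact ⟨a * h, mul_mem ha hh, b, hb, by group⟩
  · rintro ⟨a, ha, b, hb, rfl⟩
    exact ⟨a * h⁻¹, mul_mem ha (inv_mem hh), b, hb, by group⟩

section DihedralOfOrderEight

variable {Q : Type*} [Group Q]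

theorem mem_zpowers_of_orderOf_eq_four {x z : Q} (hx : orderOf x = 4)
    (hz : z ∈ Subgroup.zpowers x) : z = 1 ∨ z = x ∨ z = x ^ 2 ∨ z = x⁻¹ := by
  obtain ⟨k, rfl⟩ := Subgroup.mem_zpowers_iff.mp hz
  have hx4 : x ^ 4 = 1 := hx ▸ pow_orderOf_eq_one x
  rw [← zpow_mod_orderOf, hx]
  have : k % 4 = 0 ∨ k % 4 = 1 ∨ k % 4 = 2 ∨ k % 4 = 3 := by omega
  rcases this with h | h | h | h <;> rw [Nat.cast_ofNat, h]
  · simp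
  · simp
  · simp
  · exact Or.inr (Or.inr (Or.inr (eq_inv_of_mul_eq_one_left (by norm_cast; rw [← pow_succ, hx4]))))

theorem eq_or_eq_inv_of_mem_zpowers_of_orderOf_eq_four {x z : Q} (hx : orderOf x = 4)
    (hz : z ∈ Subgroup.zpowers x) (hz4 : orderOf z = 4) : z = x ∨ z = x⁻¹ := by
  rcases mem_zpowers_of_orderOf_eq_four hx hz with rfl | rfl | rfl | rfl
  · simp at hz4
  · exact Or.inl rfl
  · rw [orderOf_pow_of_dvd two_ne_zero (by rw [hx]; norm_num), hx] at hz4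
    norm_num at hz4
  · exact Or.inr rfl

theorem exists_orderOf_eq_four_of_card_eq_eight (h8 : Nat.card Q = 8)
    (hnc : ∃ a b : Q, ¬Commute a b) : ∃ x : Q, orderOf x = 4 := by
  by_contra! h4
  obtain ⟨a, b, hab⟩ := hnc
  refine hab (Commute.of_orderOf_dvd_two (fun q => ?_) a b)
  have hq : orderOf q ∣ 2 ^ 3 := by simpa [h8] using orderOf_dvd_natCard q
  obtain ⟨m, hm, hqm⟩ := (Nat.dvd_prime_pow Nat.prime_two).mp hq
  interval_cases m
  · simp [hqm]
  · simp [hqm]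
  · exact absurd hqm (h4 q)
  · refine absurd ?_ (h4 (q ^ 2))
    rw [orderOf_pow_of_dvd two_ne_zero (by rw [hqm]; norm_num), hqm]
    rfl

theorem index_zpowers_eq_two_of_card_eq_eight (h8 : Nat.card Q = 8) {x : Q}
    (hx : orderOf x = 4) : (Subgroup.zpowers x).index = 2 := by
  have := (Subgroup.zpowers x).index_mul_card
  rw [Nat.card_zpowers, hx, h8] at this
  omega

theorem conj_eq_or_eq_inv_of_card_eq_eight (h8 : Nat.card Q = 8) {x : Q} (hx : orderOf x = 4)
    (q : Q) : q * x * q⁻¹ = x ∨ q * x * q⁻¹ = x⁻¹ :=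
  eq_or_eq_inv_of_mem_zpowers_of_orderOf_eq_four hx
    ((Subgroup.normal_of_index_eq_two (index_zpowers_eq_two_of_card_eq_eight h8 hx)).conj_mem x
      (Subgroup.mem_zpowers x) q)
    (by rw [← MulAut.conj_apply, MulEquiv.orderOf_eq, hx])

theorem exists_dihedral_generators_of_card_eq_eight (h8 : Nat.card Q = 8) {y : Q}
    (hy2 : y ^ 2 = 1) (hy : ∃ q, ¬Commute q y) :
    ∃ x : Q, orderOf x = 4 ∧ y * x * y⁻¹ = x⁻¹ ∧ Subgroup.closure {x, y} = ⊤ := by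
  have : Finite Q := Nat.finite_of_card_ne_zero (by omega)
  obtain ⟨q₀, hq₀⟩ := hy
  obtain ⟨x, hx⟩ := exists_orderOf_eq_four_of_card_eq_eight h8 ⟨q₀, y, hq₀⟩
  have hconj := conj_eq_or_eq_inv_of_card_eq_eight h8 hx
  have hy_notMem : y ∉ Subgroup.zpowers x := by
    intro hyx
    have hy4 : orderOf y ≠ 4 := fun h => by
      have := orderOf_dvd_of_pow_eq_one hy2
      rw [h] at this
      norm_num at this
    rcases mem_zpowers_of_orderOf_eq_four hx hyx with rfl | rfl | rfl | rfl
    · exact hq₀ (Commute.one_right q₀)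
    · exact hy4 hx
    · -- conjugation fixes or inverts `x`, hence fixes `x ^ 2`
      refine hq₀ (mul_inv_eq_iff_eq_mul.mp ?_)
      have hx4 : x ^ 4 = 1 := hx ▸ pow_orderOf_eq_one x
      rcases hconj q₀ with h | h <;> rw [← conj_pow, h]
      rw [inv_pow, inv_eq_iff_mul_eq_one, ← pow_add, hx4]
    · exact hy4 (by rw [orderOf_inv, hx])
  have hgen : Subgroup.closure {x, y} = ⊤ := by
    have hlt : Subgroup.zpowers x < Subgroup.closure {x, y} :=
      lt_of_le_of_ne (Subgroup.zpowers_le.mpr (Subgroup.subset_closure (by simp)))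
        fun h => hy_notMem (h ▸ Subgroup.subset_closure (by simp))
    have := Subgroup.index_strictAnti hlt
    have := (Subgroup.closure {x, y}).index_ne_zero_of_finite
    rw [index_zpowers_eq_two_of_card_eq_eight h8 hx] at *
    exact Subgroup.index_eq_one.mp (by omega)
  refine ⟨x, hx, (hconj y).resolve_left fun hyx => hq₀ ?_, hgen⟩
  have hcen : Subgroup.closure {x, y} ≤ Subgroup.centralizer {y} := by
    rw [Subgroup.closure_le]
    rintro z (rfl | rfl) <;> simp only [SetLike.mem_coe, Subgroup.mem_centralizer_singleton_iff]
    exact (mul_inv_eq_iff_eq_mul.mp hyx).symm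
  exact Subgroup.mem_centralizer_singleton_iff.mp (hcen (hgen ▸ Subgroup.mem_top q₀))

theorem exists_mulEquiv_dihedralGroup {n : ℕ} [NeZero n] (hcard : Nat.card Q = 2 * n)
    {x y : Q} (hx : x ^ n = 1) (hy : y ^ 2 = 1) (hyx : y * x * y⁻¹ = x⁻¹)
    (hgen : Subgroup.closure {x, y} = ⊤) :
    ∃ e : DihedralGroup n ≃* Q, e (.r 1) = x ∧ e (.sr 0) = y := by
  set a : ZMod n → Q := fun i => x ^ i.val
  have ha_natCast (k : ℕ) : a k = x ^ k := by
    simp only [a, ZMod.val_natCast]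
    conv_rhs => rw [← Nat.mod_add_div k n, pow_add, pow_mul, hx, one_pow, mul_one]
  have ha_add (i j : ZMod n) : a (i + j) = a i * a j := by
    rw [← ZMod.natCast_zmod_val i, ← ZMod.natCast_zmod_val j, ← Nat.cast_add, ha_natCast,
      ha_natCast, ha_natCast, pow_add]
  have ha_sub (i j : ZMod n) : a (j - i) = (a i)⁻¹ * a j := by
    rw [eq_inv_mul_iff_mul_eq, ← ha_add, add_sub_cancel]
  have hy_inv : y⁻¹ = y := inv_eq_of_mul_eq_one_right (by rw [← sq, hy])
  have ha_conj (i : ZMod n) : y * a i * y⁻¹ = (a i)⁻¹ := by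
    simp only [a]; rw [← conj_pow, hyx, inv_pow]
  let ψ : DihedralGroup n →* Q :=
    { toFun := fun
        | .r i => a i
        | .sr i => y * a i
      map_one' := show a 0 = 1 by simp [a]
      map_mul' := by
        rintro (i | i) (j | j)
        · exact ha_add i j
        · show y * a (j - i) = a i * (y * a j)
          rw [ha_sub, ← ha_conj i, hy_inv]
          rw [mul_assoc, mul_assoc, ← mul_assoc y y, ← sq, hy, one_mul]
        · show y * a (i + j) = y * a i * a j
          rw [ha_add, mul_assoc]
        · show a (j - i) = y * a i * (y * a j)
          rw [ha_sub, ← ha_conj i, hy_inv, mul_assoc] }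
  have hψr : ψ (.r 1) = x := show a 1 = x by simpa using ha_natCast 1
  have hψsr : ψ (.sr 0) = y := show y * a 0 = y by simp [a]
  have hψ_surj : Function.Surjective ψ := by
    rw [← MonoidHom.range_eq_top, eq_top_iff, ← hgen, Subgroup.closure_le]
    rintro z (rfl | rfl)
    · exact ⟨.r 1, hψr⟩
    · exact ⟨.sr 0, hψsr⟩
  have hψ_bij : Function.Bijective ψ := (Nat.bijective_iff_surjective_and_card ψ).mpr
    ⟨hψ_surj, by rw [DihedralGroup.nat_card, hcard]⟩
  exact ⟨MulEquiv.ofBijective ψ hψ_bij, hψr, hψsr⟩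

end DihedralOfOrderEight

set_option maxRecDepth 10000 in
theorem Equiv.Perm.sq_eq_one_and_eq_one_of_sign_fin_four :
    ∀ q : Perm (Fin 4), q ^ 8 = 1 → ∀ b, q b = b → q ^ 2 = 1 ∧ (sign q = 1 → q = 1) := by
  decide

/-- A permutation of a 4-element set that fixes a point and has order dividing 8 is the identity
or a transposition. -/
theorem Equiv.Perm.sq_eq_one_and_eq_one_of_sign {α : Type*} [Fintype α] [DecidableEq α]
    (h4 : Fintype.card α = 4) {q : Perm α} (h8 : q ^ 8 = 1) {b : α} (hb : q b = b) :
    q ^ 2 = 1 ∧ (sign q = 1 → q = 1) := by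
  set e := Fintype.equivFinOfCardEq h4
  obtain ⟨hsq, hsign⟩ := sq_eq_one_and_eq_one_of_sign_fin_four (e.permCongrHom q)
    (by rw [← map_pow, h8, map_one]) (e b) (by simp [Equiv.permCongrHom_coe, hb])
  refine ⟨e.permCongrHom.injective (by rw [map_pow, hsq, map_one]), fun hs => ?_⟩
  refine e.permCongrHom.injective ((hsign ?_).trans (map_one _).symm)
  rwa [Equiv.permCongrHom_coe, sign_permCongr]

theorem Equiv.Perm.eq_one_of_forall_commute {α : Type*} {H : Subgroup (Perm α)}
    (htrans : ∀ a b, ∃ h ∈ H, h a = b) {q : Perm α} (hq : ∀ h ∈ H, Commute h q) {b : α}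
    (hb : q b = b) : q = 1 := by
  ext a
  obtain ⟨h, hH, rfl⟩ := htrans b a
  rw [← Perm.mul_apply, ← (hq h hH).eq, Perm.mul_apply, hb, Perm.one_apply]

theorem two_pow_dvd_eight_of_dvd {m : ℕ} (h : 2 ^ m ∣ 24) : 2 ^ m ∣ 8 :=
  (Nat.Coprime.pow_left m (by norm_num : Nat.Coprime 2 3)).dvd_of_dvd_mul_left (h : 2 ^ m ∣ 3 * 8)

theorem IsPGroup.stabilizer_smul {p : ℕ} {G V : Type*} [Group G] [MulAction G V] {v : V}
    (hp : IsPGroup p (stabilizer G v)) (g : G) : IsPGroup p (stabilizer G (g • v)) := by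
  rw [stabilizer_smul_eq_stabilizer_map_conj]
  exact hp.map _

def ActsByAutomorphisms {V : Type*} (Sg : SimpleGraph V) (G : Type*) [Group G] [MulAction G V] :
    Prop :=
  ∀ (g : G) (a b : V), Sg.Adj (g • a) (g • b) ↔ Sg.Adj a b

section LocalAction

variable {V G : Type*} [Group G] [MulAction G V] {Sg : SimpleGraph V}

theorem mem_pstab_iff {z : G} {v : V} :
    z ∈ pstab Sg G v ↔ z • v = v ∧ ∀ u, Sg.Adj v u → z • u = u := by
  simp [pstab, Subgroup.mem_iInf, mem_stabilizer_iff, SimpleGraph.mem_neighborSet]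

theorem pstab_le_stabilizer (v : V) : pstab Sg G v ≤ stabilizer G v := inf_le_left

theorem pstab_le_stabilizer_of_adj {v u : V} (h : Sg.Adj v u) :
    pstab Sg G v ≤ stabilizer G u :=
  fun _ hz => (mem_pstab_iff.mp hz).2 u h

theorem mem_pstab_smul_iff (hact : ActsByAutomorphisms Sg G) {z : G} (h : G) (v : V) :
    z ∈ pstab Sg G (h • v) ↔ h⁻¹ * z * h ∈ pstab Sg G v := by
  have hfix (w : V) : (h⁻¹ * z * h) • w = w ↔ z • h • w = h • w := by
    rw [mul_smul, mul_smul, inv_smul_eq_iff]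
  simp only [mem_pstab_iff, hfix]
  refine and_congr_right fun _ => ⟨fun H w hw => H _ ((hact h v w).2 hw), fun H u hu => ?_⟩
  simpa using H (h⁻¹ • u) (by simpa using (hact h⁻¹ (h • v) u).2 hu)

def localAction (hact : ActsByAutomorphisms Sg G) (v : V) :
    stabilizer G v →* Equiv.Perm (Sg.neighborSet v) where
  toFun a := (toPerm (a : G)).subtypePerm fun u => by
    have := hact a v u
    rwa [show (a : G) • v = v from a.2] at this
  map_one' := by ext; simp
  map_mul' a b := by ext u; exact mul_smul (a : G) b (u : V)

@[simp]
theorem localAction_apply_coe (hact : ActsByAutomorphisms Sg G) {v : V} (a : stabilizer G v)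
    (u : Sg.neighborSet v) : (localAction hact v a u : V) = (a : G) • (u : V) :=
  rfl

theorem ker_localAction (hact : ActsByAutomorphisms Sg G) (v : V) :
    (localAction hact v).ker = (pstab Sg G v).subgroupOf (stabilizer G v) := by
  ext a
  simp only [MonoidHom.mem_ker, Subgroup.mem_subgroupOf, mem_pstab_iff, Equiv.ext_iff,
    Subtype.ext_iff, localAction_apply_coe, Equiv.Perm.one_apply, Subtype.forall,
    SimpleGraph.mem_neighborSet]
  exact ⟨fun h => ⟨a.2, h⟩, fun h => h.2⟩

theorem localAction_eq_one_iff (hact : ActsByAutomorphisms Sg G) {v : V} (a : stabilizer G v) :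
    localAction hact v a = 1 ↔ (a : G) ∈ pstab Sg G v := by
  rw [← MonoidHom.mem_ker, ker_localAction, Subgroup.mem_subgroupOf]

theorem pstab_eq_bot_of_pstab_le [FaithfulSMul G V] (hact : ActsByAutomorphisms Sg G)
    (hconn : Sg.Connected)
    (harc : ∀ a b c d : V, Sg.Adj a b → Sg.Adj c d → ∃ g : G, g • a = c ∧ g • b = d)
    {v w : V} (hvw : Sg.Adj v w) (hle : pstab Sg G w ≤ pstab Sg G v) : pstab Sg G v = ⊥ := by
  have hstep (a b : V) (hab : Sg.Adj a b) : pstab Sg G b ≤ pstab Sg G a := by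
    obtain ⟨h, rfl, rfl⟩ := harc v w a b hvw hab
    intro z hz
    exact (mem_pstab_smul_iff hact h v).2 (hle ((mem_pstab_smul_iff hact h w).1 hz))
  have hwalk (a b : V) (p : Sg.Walk a b) : pstab Sg G a = pstab Sg G b := by
    induction p with
    | nil => rfl
    | cons hab _ ih => exact (le_antisymm (hstep _ _ hab.symm) (hstep _ _ hab)).trans ih
  refine eq_bot_iff.2 fun z hz => Subgroup.mem_bot.2 (eq_of_smul_eq_smul (α := V) fun a => ?_)
  rw [one_smul]
  exact (mem_pstab_iff.1 (hwalk v a (hconn.preconnected v a).some ▸ hz)).1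

theorem relIndex_inf_stabilizer (hact : ActsByAutomorphisms Sg G) {v w : V} (hvw : Sg.Adj v w)
    (hloc : ∀ u, Sg.Adj v u → ∃ a : G, a • v = v ∧ a • w = u) :
    (stabilizer G v ⊓ stabilizer G w).relIndex (stabilizer G v) = (Sg.neighborSet v).ncard := by
  have hstab : (stabilizer G v ⊓ stabilizer G w).subgroupOf (stabilizer G v) =
      stabilizer (stabilizer G v) w := by
    ext a
    simp [Subgroup.mem_subgroupOf, Subgroup.smul_def]
  have horbit : orbit (stabilizer G v) w = Sg.neighborSet v := by
    ext u
    refine ⟨?_, fun hu => ?_⟩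
    · rintro ⟨a, rfl⟩
      have := (hact a v w).2 hvw
      rwa [show (a : G) • v = v from a.2] at this
    · obtain ⟨a, hav, rfl⟩ := hloc u hu
      exact ⟨⟨a, hav⟩, rfl⟩
  rw [Subgroup.relIndex, hstab, index_stabilizer, horbit]

theorem stabilizer_eq_closure (hact : ActsByAutomorphisms Sg G) {v : V} {S : Set G}
    (hS : S ⊆ stabilizer G v) (hK : pstab Sg G v ≤ Subgroup.closure S) {x y : stabilizer G v}
    (hx : (x : G) ∈ Subgroup.closure S) (hy : (y : G) ∈ Subgroup.closure S)
    (hgen : Subgroup.closure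
      {(localAction hact v).rangeRestrict x, (localAction hact v).rangeRestrict y} = ⊤) :
    stabilizer G v = Subgroup.closure S := by
  refine le_antisymm ?_ ((Subgroup.closure_le _).2 hS)
  set L := (Subgroup.closure S).subgroupOf (stabilizer G v)
  have hmap : L.map (localAction hact v).rangeRestrict = ⊤ := by
    rw [eq_top_iff, ← hgen, Subgroup.closure_le]
    rintro _ (rfl | rfl)
    · exact ⟨x, hx, rfl⟩
    · exact ⟨y, hy, rfl⟩
  have hker : (localAction hact v).rangeRestrict.ker ≤ L := by
    rw [MonoidHom.ker_rangeRestrict, ker_localAction]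
    exact fun a ha => hK ha
  have hL : L = ⊤ := by rw [← Subgroup.comap_map_eq_self hker, hmap, Subgroup.comap_top]
  exact Subgroup.subgroupOf_eq_top.1 hL

end LocalAction

section LocalSign

open scoped Classical

variable {V G : Type*} [Fintype V] [Group G] [MulAction G V] {Sg : SimpleGraph V}

noncomputable def localSign (hact : ActsByAutomorphisms Sg G) (v : V) :
    stabilizer G v →* ℤˣ :=
  Equiv.Perm.sign.comp (localAction hact v)

theorem localAction_pow_eight (hact : ActsByAutomorphisms Sg G) {v : V}
    (hp : IsPGroup 2 (stabilizer G v)) (hv : (Sg.neighborSet v).ncard = 4)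
    (a : stabilizer G v) : localAction hact v a ^ 8 = 1 := by
  obtain ⟨k, hk⟩ := hp a
  obtain ⟨m, -, hm⟩ := (Nat.dvd_prime_pow Nat.prime_two).mp
    ((orderOf_map_dvd (localAction hact v) a).trans (orderOf_dvd_of_pow_eq_one hk))
  have h24 : orderOf (localAction hact v a) ∣ 24 := by
    have := orderOf_dvd_natCard (localAction hact v a)
    rwa [Nat.card_perm, Nat.card_coe_set_eq, hv] at this
  rw [hm] at h24
  exact orderOf_dvd_iff_pow_eq_one.mp (hm ▸ two_pow_dvd_eight_of_dvd h24)

theorem localAction_sq_eq_one_and_eq_one_of_sign (hact : ActsByAutomorphisms Sg G) {v : V}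
    (hp : IsPGroup 2 (stabilizer G v)) (hv : (Sg.neighborSet v).ncard = 4)
    (a : stabilizer G v) {u : V} (hu : Sg.Adj v u) (hau : (a : G) • u = u) :
    localAction hact v a ^ 2 = 1 ∧
      (Equiv.Perm.sign (localAction hact v a) = 1 → localAction hact v a = 1) :=
  Equiv.Perm.sq_eq_one_and_eq_one_of_sign
    (by rw [← Nat.card_eq_fintype_card, Nat.card_coe_set_eq, hv])
    (localAction_pow_eight hact hp hv a) (b := ⟨u, hu⟩) (Subtype.ext hau)

theorem localSign_eq_one_iff (hact : ActsByAutomorphisms Sg G) {v : V}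
    (hp : IsPGroup 2 (stabilizer G v)) (hv : (Sg.neighborSet v).ncard = 4)
    (a : stabilizer G v) {u : V} (hu : Sg.Adj v u) (hau : (a : G) • u = u) :
    localSign hact v a = 1 ↔ (a : G) ∈ pstab Sg G v := by
  rw [← localAction_eq_one_iff hact]
  refine ⟨(localAction_sq_eq_one_and_eq_one_of_sign hact hp hv a hu hau).2, fun h => ?_⟩
  simp [localSign, h]

theorem ker_localSign_comp_inclusion (hact : ActsByAutomorphisms Sg G) {v u : V}
    (hp : IsPGroup 2 (stabilizer G v)) (hv : (Sg.neighborSet v).ncard = 4) (hu : Sg.Adj v u)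
    {H : Subgroup G} (hHv : H ≤ stabilizer G v) (hHu : H ≤ stabilizer G u) :
    ((localSign hact v).comp (Subgroup.inclusion hHv)).ker = (pstab Sg G v).subgroupOf H := by
  ext a
  rw [MonoidHom.mem_ker, Subgroup.mem_subgroupOf, MonoidHom.comp_apply]
  exact localSign_eq_one_iff hact hp hv _ hu (hHu a.2)

theorem card_stabilizer_le_eight_of_pstab_eq_bot (hact : ActsByAutomorphisms Sg G) {v : V}
    (hp : IsPGroup 2 (stabilizer G v)) (hv : (Sg.neighborSet v).ncard = 4)
    (hbot : pstab Sg G v = ⊥) : Nat.card (stabilizer G v) ≤ 8 := by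
  have hinj : Function.Injective (localAction hact v) := by
    rw [← MonoidHom.ker_eq_bot_iff, ker_localAction, hbot, Subgroup.bot_subgroupOf]
  have h24 : Nat.card (stabilizer G v) ∣ 24 := by
    have := Subgroup.card_dvd_of_injective _ hinj
    rwa [Nat.card_perm, Nat.card_coe_set_eq, hv] at this
  have : Finite (stabilizer G v) :=
    Nat.finite_of_card_ne_zero (ne_zero_of_dvd_ne_zero (by norm_num) h24)
  have : Fact (Nat.Prime 2) := ⟨Nat.prime_two⟩
  obtain ⟨n, hn⟩ := hp.exists_card_eq
  rw [hn] at h24 ⊢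
  exact Nat.le_of_dvd (by norm_num) (two_pow_dvd_eight_of_dvd h24)

theorem exists_mem_pstab_not_mem_pstab [FaithfulSMul G V] (hact : ActsByAutomorphisms Sg G)
    (hconn : Sg.Connected)
    (harc : ∀ a b c d : V, Sg.Adj a b → Sg.Adj c d → ∃ g : G, g • a = c ∧ g • b = d)
    {v w : V} (hvw : Sg.Adj v w) (hp : IsPGroup 2 (stabilizer G v))
    (hv : (Sg.neighborSet v).ncard = 4) (hbig : 8 < Nat.card (stabilizer G v)) :
    ∃ y ∈ pstab Sg G w, y ∉ pstab Sg G v := by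
  by_contra! hle
  exact hbig.not_ge (card_stabilizer_le_eight_of_pstab_eq_bot hact hp hv
    (pstab_eq_bot_of_pstab_le hact hconn harc hvw hle))

theorem localSign_eq_neg_one (hact : ActsByAutomorphisms Sg G) {v : V}
    (hp : IsPGroup 2 (stabilizer G v)) (hv : (Sg.neighborSet v).ncard = 4)
    (a : stabilizer G v) {u : V} (hu : Sg.Adj v u) (hau : (a : G) • u = u)
    (ha : (a : G) ∉ pstab Sg G v) : localSign hact v a = -1 :=
  (Int.units_eq_one_or _).resolve_left fun h => ha ((localSign_eq_one_iff hact hp hv a hu hau).1 h)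

theorem relIndex_pstab_inf_stabilizer (hact : ActsByAutomorphisms Sg G) {v w : V}
    (hp : IsPGroup 2 (stabilizer G v)) (hv : (Sg.neighborSet v).ncard = 4) (hvw : Sg.Adj v w)
    {y : G} (hyE : y ∈ stabilizer G v ⊓ stabilizer G w) (hy : y ∉ pstab Sg G v) :
    (pstab Sg G v).relIndex (stabilizer G v ⊓ stabilizer G w) = 2 := by
  set σ := (localSign hact v).comp
    (Subgroup.inclusion (inf_le_left : stabilizer G v ⊓ stabilizer G w ≤ _))
  have hsurj : Function.Surjective σ := fun s => (Int.units_eq_one_or s).elim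
    (fun h => ⟨1, by rw [map_one, h]⟩)
    (fun h => ⟨⟨y, hyE⟩, (localSign_eq_neg_one hact hp hv ⟨y, hyE.1⟩ hvw hyE.2 hy).trans h.symm⟩)
  rw [Subgroup.relIndex, ← ker_localSign_comp_inclusion hact hp hv hvw inf_le_left inf_le_right,
    Subgroup.index_ker, MonoidHom.range_eq_top.2 hsurj, Subgroup.card_top]
  simp

/-- `G_v^{[1]}` has index 2 in the arc stabilizer `G_{vw}`. -/
theorem mul_mem_pstab_iff (hact : ActsByAutomorphisms Sg G) {v w : V}
    (hp : IsPGroup 2 (stabilizer G v)) (hv : (Sg.neighborSet v).ncard = 4) (hvw : Sg.Adj v w)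
    {y : G} (hyE : y ∈ stabilizer G v ⊓ stabilizer G w) (hy : y ∉ pstab Sg G v)
    {a b : G} (ha : a ∈ stabilizer G v ⊓ stabilizer G w)
    (hb : b ∈ stabilizer G v ⊓ stabilizer G w) :
    a * b ∈ pstab Sg G v ↔ (a ∈ pstab Sg G v ↔ b ∈ pstab Sg G v) :=
  Subgroup.mul_mem_iff_of_index_two (a := ⟨a, ha⟩) (b := ⟨b, hb⟩)
    (relIndex_pstab_inf_stabilizer hact hp hv hvw hyE hy)

theorem card_range_localAction (hact : ActsByAutomorphisms Sg G) {v w : V}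
    (hp : IsPGroup 2 (stabilizer G v)) (hv : (Sg.neighborSet v).ncard = 4) (hvw : Sg.Adj v w)
    (hloc : ∀ u, Sg.Adj v u → ∃ a : G, a • v = v ∧ a • w = u)
    {y : G} (hyE : y ∈ stabilizer G v ⊓ stabilizer G w) (hy : y ∉ pstab Sg G v) :
    Nat.card (localAction hact v).range = 8 := by
  have hKE : pstab Sg G v ≤ stabilizer G v ⊓ stabilizer G w :=
    le_inf (pstab_le_stabilizer v) (pstab_le_stabilizer_of_adj hvw)
  rw [← Subgroup.index_ker, ker_localAction, ← Subgroup.relIndex,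
    ← Subgroup.relIndex_mul_relIndex _ _ _ hKE inf_le_left,
    relIndex_pstab_inf_stabilizer hact hp hv hvw hyE hy, relIndex_inf_stabilizer hact hvw hloc, hv]

theorem exists_dihedral_generators_localAction (hact : ActsByAutomorphisms Sg G) {v w : V}
    (hp : IsPGroup 2 (stabilizer G v)) (hv : (Sg.neighborSet v).ncard = 4) (hvw : Sg.Adj v w)
    (hloc : ∀ u, Sg.Adj v u → ∃ a : G, a • v = v ∧ a • w = u)
    {y : G} (hyE : y ∈ stabilizer G v ⊓ stabilizer G w) (hy : y ∉ pstab Sg G v) :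
    ∃ x : stabilizer G v,
      orderOf ((localAction hact v).rangeRestrict x) = 4 ∧
      (localAction hact v).rangeRestrict ⟨y, hyE.1⟩ * (localAction hact v).rangeRestrict x *
          ((localAction hact v).rangeRestrict ⟨y, hyE.1⟩)⁻¹ =
        ((localAction hact v).rangeRestrict x)⁻¹ ∧
      Subgroup.closure {(localAction hact v).rangeRestrict x,
        (localAction hact v).rangeRestrict ⟨y, hyE.1⟩} = ⊤ := by
  set ρ := localAction hact v
  have hy2 : ρ.rangeRestrict ⟨y, hyE.1⟩ ^ 2 = 1 :=
    Subtype.ext (localAction_sq_eq_one_and_eq_one_of_sign hact hp hv ⟨y, hyE.1⟩ hvw hyE.2).1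
  have hnc : ∃ q, ¬Commute q (ρ.rangeRestrict ⟨y, hyE.1⟩) := by
    by_contra! h
    refine hy ((localAction_eq_one_iff hact _).1 (Equiv.Perm.eq_one_of_forall_commute
      (H := ρ.range) (q := ρ ⟨y, hyE.1⟩) ?_ ?_ (b := ⟨w, hvw⟩) (Subtype.ext hyE.2)))
    · rintro ⟨a, ha⟩ ⟨b, hb⟩
      obtain ⟨g₁, hg₁, rfl⟩ := hloc a ha
      obtain ⟨g₂, hg₂, rfl⟩ := hloc b hb
      have h₁ : (ρ ⟨g₁, hg₁⟩)⁻¹ ⟨g₁ • w, ha⟩ = ⟨w, hvw⟩ := Equiv.Perm.inv_eq_iff_eq.2 rfl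
      exact ⟨ρ ⟨g₂, hg₂⟩ * (ρ ⟨g₁, hg₁⟩)⁻¹, mul_mem ⟨_, rfl⟩ (inv_mem ⟨_, rfl⟩),
        by rw [Equiv.Perm.mul_apply, h₁]; rfl⟩
    · rintro _ ⟨a, rfl⟩
      exact (h (ρ.rangeRestrict a)).map ρ.range.subtype
  obtain ⟨x', hx4, hrel, hgen⟩ := exists_dihedral_generators_of_card_eq_eight
    (card_range_localAction hact hp hv hvw hloc hyE hy) hy2 hnc
  obtain ⟨x, rfl⟩ := ρ.rangeRestrict_surjective x'
  exact ⟨x, hx4, hrel, hgen⟩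

theorem pstab_eq_closure_inf_insert (hact : ActsByAutomorphisms Sg G) {v w : V}
    (hp : IsPGroup 2 (stabilizer G w)) (hw : (Sg.neighborSet w).ncard = 4) (hvw : Sg.Adj v w)
    {z : G} (hzv : z ∈ pstab Sg G v) (hzw : z ∉ pstab Sg G w) :
    pstab Sg G v = Subgroup.closure ((pstab Sg G v ⊓ pstab Sg G w : Subgroup G) ∪ {z}) := by
  have hE {k : G} (hk : k ∈ pstab Sg G v) : k ∈ stabilizer G w ⊓ stabilizer G v :=
    ⟨pstab_le_stabilizer_of_adj hvw hk, pstab_le_stabilizer v hk⟩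
  refine le_antisymm (fun k hk => ?_) ((Subgroup.closure_le _).2 ?_)
  · by_cases hkw : k ∈ pstab Sg G w
    · exact Subgroup.subset_closure (Or.inl ⟨hk, hkw⟩)
    · have hzk : z⁻¹ * k ∈ pstab Sg G w := by
        rw [mul_mem_pstab_iff hact hp hw hvw.symm (hE hzv) hzw (Subgroup.inv_mem _ (hE hzv))
          (hE hk), inv_mem_iff]
        exact iff_of_false hzw hkw
      rw [← mul_inv_cancel_left z k]
      exact mul_mem (Subgroup.subset_closure (Or.inr rfl))
        (Subgroup.subset_closure (Or.inl (Subgroup.mem_inf.2 ⟨mul_mem (inv_mem hzv) hk, hzk⟩)))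
  · rintro k (hk | rfl)
    · exact hk.1
    · exact hzv

theorem exists_surjective_ker_eq_pstab_inf_pstab (hact : ActsByAutomorphisms Sg G) {v w : V}
    (hp : IsPGroup 2 (stabilizer G v)) (hp' : IsPGroup 2 (stabilizer G w))
    (hv : (Sg.neighborSet v).ncard = 4) (hw : (Sg.neighborSet w).ncard = 4) (hvw : Sg.Adj v w)
    {y z : G} (hyw : y ∈ pstab Sg G w) (hyv : y ∉ pstab Sg G v)
    (hzv : z ∈ pstab Sg G v) (hzw : z ∉ pstab Sg G w) :
    ∃ f : ↥(stabilizer G v ⊓ stabilizer G w) →* Multiplicative (ZMod 2 × ZMod 2),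
      Function.Surjective f ∧
      f.ker = (pstab Sg G v ⊓ pstab Sg G w).subgroupOf (stabilizer G v ⊓ stabilizer G w) := by
  set E := stabilizer G v ⊓ stabilizer G w
  have hyE : y ∈ E := ⟨pstab_le_stabilizer_of_adj hvw.symm hyw, pstab_le_stabilizer w hyw⟩
  have hzE : z ∈ E := ⟨pstab_le_stabilizer v hzv, pstab_le_stabilizer_of_adj hvw hzv⟩
  set σ := (localSign hact v).comp (Subgroup.inclusion (inf_le_left : E ≤ _))
  set τ := (localSign hact w).comp (Subgroup.inclusion (inf_le_right : E ≤ _))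
  have hσy : σ ⟨y, hyE⟩ = -1 := localSign_eq_neg_one hact hp hv ⟨y, hyE.1⟩ hvw hyE.2 hyv
  have hτy : τ ⟨y, hyE⟩ = 1 := (localSign_eq_one_iff hact hp' hw ⟨y, hyE.2⟩ hvw.symm hyE.1).2 hyw
  have hσz : σ ⟨z, hzE⟩ = 1 := (localSign_eq_one_iff hact hp hv ⟨z, hzE.1⟩ hvw hzE.2).2 hzv
  have hτz : τ ⟨z, hzE⟩ = -1 := localSign_eq_neg_one hact hp' hw ⟨z, hzE.2⟩ hvw.symm hzE.1 hzw
  have hsurj : Function.Surjective (σ.prod τ) := by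
    rintro ⟨s, t⟩
    rcases Int.units_eq_one_or s with rfl | rfl <;> rcases Int.units_eq_one_or t with rfl | rfl
    · exact ⟨1, map_one _⟩
    · exact ⟨⟨z, hzE⟩, Prod.ext hσz hτz⟩
    · exact ⟨⟨y, hyE⟩, Prod.ext hσy hτy⟩
    · exact ⟨⟨y, hyE⟩ * ⟨z, hzE⟩, Prod.ext
        (by rw [MonoidHom.prod_apply, map_mul σ, hσy, hσz, mul_one])
        (by rw [MonoidHom.prod_apply, map_mul τ, hτy, hτz, one_mul])⟩
  let e : ℤˣ ≃* Multiplicative (ZMod 2) := mulEquivOfPrimeCardEq (p := 2) (by simp) (by simp)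
  let ι := (e.prodCongr e).trans (MulEquiv.prodMultiplicative _ _).symm
  refine ⟨(ι : _ →* _).comp (σ.prod τ), ι.surjective.comp hsurj, ?_⟩
  rw [MonoidHom.ker_mulEquiv_comp, MonoidHom.ker_prod,
    ker_localSign_comp_inclusion hact hp hv hvw inf_le_left inf_le_right,
    ker_localSign_comp_inclusion hact hp' hw hvw.symm inf_le_right inf_le_left]
  ext
  simp [Subgroup.mem_subgroupOf]

theorem exists_dihedral_quotient_stabilizer (hact : ActsByAutomorphisms Sg G) {v w : V}
    (hp : IsPGroup 2 (stabilizer G v)) (hv : (Sg.neighborSet v).ncard = 4) (hvw : Sg.Adj v w)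
    (hloc : ∀ u, Sg.Adj v u → ∃ a : G, a • v = v ∧ a • w = u)
    {y : G} (hyE : y ∈ stabilizer G v ⊓ stabilizer G w) (hy : y ∉ pstab Sg G v) :
    ∃ x : G, ∃ hx : x ∈ stabilizer G v,
      x ∉ stabilizer G v ⊓ stabilizer G w ∧
      stabilizer G v =
        Subgroup.closure (((stabilizer G v ⊓ stabilizer G w : Subgroup G) : Set G) ∪ {x}) ∧
      stabilizer G v = Subgroup.closure ((pstab Sg G v : Set G) ∪ {x, y}) ∧
      (x * y) ^ 2 ∈ pstab Sg G v ∧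
      ∃ f : stabilizer G v →* DihedralGroup 4,
        Function.Surjective f ∧ f.ker = (pstab Sg G v).subgroupOf (stabilizer G v) ∧
        Subgroup.closure {f ⟨x, hx⟩, f ⟨y, hyE.1⟩} = ⊤ := by
  obtain ⟨x, hx4, hrel, hgen⟩ :=
    exists_dihedral_generators_localAction hact hp hv hvw hloc hyE hy
  set ρ := (localAction hact v).rangeRestrict
  set ŷ : stabilizer G v := ⟨y, hyE.1⟩
  have hKE : pstab Sg G v ≤ stabilizer G v ⊓ stabilizer G w :=
    le_inf (pstab_le_stabilizer v) (pstab_le_stabilizer_of_adj hvw)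
  have hy2 : ρ ŷ ^ 2 = 1 :=
    Subtype.ext (localAction_sq_eq_one_and_eq_one_of_sign hact hp hv ŷ hvw hyE.2).1
  obtain ⟨e, -, -⟩ := exists_mulEquiv_dihedralGroup (n := 4)
    (card_range_localAction hact hp hv hvw hloc hyE hy) (hx4 ▸ pow_orderOf_eq_one _) hy2 hrel hgen
  refine ⟨x, x.2, fun hxE => ?_, ?_, ?_, ?_, (e.symm : _ →* _).comp ρ, ?_, ?_, ?_⟩
  · have hx2 : ρ x ^ 2 = 1 :=
      Subtype.ext (localAction_sq_eq_one_and_eq_one_of_sign hact hp hv x hvw hxE.2).1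
    have := orderOf_dvd_of_pow_eq_one hx2
    rw [hx4] at this
    norm_num at this
  · exact stabilizer_eq_closure hact
      (Set.union_subset (fun _ h => (Subgroup.mem_inf.1 h).1) (Set.singleton_subset_iff.2 x.2))
      (hKE.trans fun _ h => Subgroup.subset_closure (Or.inl h))
      (Subgroup.subset_closure (by simp)) (Subgroup.subset_closure (Or.inl hyE)) hgen
  · exact stabilizer_eq_closure hact
      (Set.union_subset (pstab_le_stabilizer v)
        (Set.insert_subset_iff.2 ⟨x.2, Set.singleton_subset_iff.2 hyE.1⟩))
      (fun _ h => Subgroup.subset_closure (Or.inl h))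
      (Subgroup.subset_closure (by simp)) (Subgroup.subset_closure (by simp [ŷ])) hgen
  · have hxy : ρ ((x * ŷ) ^ 2) = 1 := by
      have : (ρ x * ρ ŷ) ^ 2 = ρ x * (ρ ŷ * ρ x * (ρ ŷ)⁻¹) * ρ ŷ ^ 2 := by simp only [sq]; group
      rw [map_pow, map_mul, this, hrel, hy2, mul_inv_cancel, one_mul]
    simpa using (localAction_eq_one_iff hact _).1 (congrArg Subtype.val hxy)
  · exact e.symm.surjective.comp (MonoidHom.rangeRestrict_surjective _)
  · rw [MonoidHom.ker_mulEquiv_comp, MonoidHom.ker_rangeRestrict, ker_localAction]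
  · rw [MonoidHom.coe_comp, ← Set.image_pair, Set.image_comp, Set.image_pair ρ,
      ← MonoidHom.map_closure, hgen, Subgroup.map_top_of_surjective _ e.symm.surjective]

theorem exists_inDC_sq_mem_pstab (hact : ActsByAutomorphisms Sg G) {v w : V}
    (hp : IsPGroup 2 (stabilizer G v)) (hv : (Sg.neighborSet v).ncard = 4) (hvw : Sg.Adj v w)
    {g : G} (hgv : g • v = w) (hgw : g • w = v) {y : G} (hyw : y ∈ pstab Sg G w)
    (hyv : y ∉ pstab Sg G v) :
    ∃ g' : G, inDC (stabilizer G v) g g' ∧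
      (∀ z : G, inDC (stabilizer G v) g' z ↔ inDC (stabilizer G v) g z) ∧
      g' • v = w ∧ g' • w = v ∧ g' ^ 2 ∈ pstab Sg G v := by
  have hyE : y ∈ stabilizer G v ⊓ stabilizer G w :=
    ⟨pstab_le_stabilizer_of_adj hvw.symm hyw, pstab_le_stabilizer w hyw⟩
  have hg2E : g ^ 2 ∈ stabilizer G v ⊓ stabilizer G w :=
    ⟨by simp [mem_stabilizer_iff, sq, mul_smul, hgv, hgw],
      by simp [mem_stabilizer_iff, sq, mul_smul, hgv, hgw]⟩
  have hconj : g * y * g⁻¹ ∈ pstab Sg G v := by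
    have := (mem_pstab_smul_iff hact g⁻¹ v (z := y)).1
      (by rwa [show g⁻¹ • v = w from inv_smul_eq_iff.2 hgw.symm])
    rwa [inv_inv] at this
  have hconjE : g * y * g⁻¹ ∈ stabilizer G v ⊓ stabilizer G w :=
    ⟨pstab_le_stabilizer v hconj, pstab_le_stabilizer_of_adj hvw hconj⟩
  by_cases hg2 : g ^ 2 ∈ pstab Sg G v
  · exact ⟨g, ⟨1, one_mem _, 1, one_mem _, by group⟩, fun _ => Iff.rfl, hgv, hgw, hg2⟩
  · -- `G_v^{[1]}` has index 2 in `G_{vw}`, and `y`, `g²` lie outside it while `g y g⁻¹` lies in it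
    refine ⟨y * g, ⟨y, hyE.1, 1, one_mem _, by group⟩, inDC_mul_left_iff hyE.1 g,
      by rw [mul_smul, hgv, hyE.2], by rw [mul_smul, hgw, hyE.1], ?_⟩
    have hsq : (y * g) ^ 2 = y * (g * y * g⁻¹) * g ^ 2 := by simp only [sq]; group
    rw [hsq, mul_mem_pstab_iff hact hp hv hvw hyE hyv (mul_mem hyE hconjE) hg2E,
      mul_mem_pstab_iff hact hp hv hvw hyE hyv hyE hconjE]
    simp [hyv, hconj, hg2]

end LocalSign

/-- **Lemma 6.3.**  Let `Sg` be a finite connected tetravalent graph, `G ≤ Aut Sg`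
arc-transitive, `(ω, ω')` an arc, `g ∈ G` with `g·ω = ω'` and `g·ω' = ω`, and suppose
the vertex stabilizer `G_ω` is a `2`-group of order at least `16`.  Then:
(a) `G_{ωω'}^{[1]} = G_ω^{[1]} ∩ G_{ω'}^{[1]}` is normal of index `4` in the arc
    stabilizer `G_{ωω'}`, with quotient `ℤ₂ × ℤ₂`;
(b) there are `x ∈ G_ω \ G_{ωω'}` and `y ∈ G_{ω'}^{[1]} \ G_ω^{[1]}` with
    `G_ω = ⟨G_{ωω'}, x⟩ = ⟨G_ω^{[1]}, x, y⟩`, `G_ω^{[1]} = ⟨G_{ωω'}^{[1]}, y^g⟩`,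
    `(xy)² ∈ G_ω^{[1]}`, and `G_ω/G_ω^{[1]} ≅ D₈` generated by the images of `x, y`;
(c) there is `g̃ ∈ G_ω g G_ω` with `G_ω g̃ G_ω = G_ω g G_ω`, interchanging `ω` and `ω'`,
    and with `g̃² ∈ G_ω^{[1]}`. -/
theorem tetravalent_lemma_6_3 {V : Type*} [Fintype V] (Sg : SimpleGraph V)
    {G : Type*} [Group G] [MulAction G V] [FaithfulSMul G V]
    (hact : ∀ (g : G) (a b : V), Sg.Adj (g • a) (g • b) ↔ Sg.Adj a b)
    (hconn : Sg.Connected)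
    (hval : ∀ v : V, (Sg.neighborSet v).ncard = 4)
    (harc : ∀ a b c d : V, Sg.Adj a b → Sg.Adj c d → ∃ g : G, g • a = c ∧ g • b = d)
    (ω ω' : V) (hadj : Sg.Adj ω ω')
    (g : G) (hgω : g • ω = ω') (hgω' : g • ω' = ω)
    (h2 : IsPGroup 2 (MulAction.stabilizer G ω))
    (hbig : 16 ≤ Nat.card (MulAction.stabilizer G ω)) :
    -- (a)
    (((pstab Sg G ω ⊓ pstab Sg G ω').subgroupOf
        (MulAction.stabilizer G ω ⊓ MulAction.stabilizer G ω')).Normal ∧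
      (pstab Sg G ω ⊓ pstab Sg G ω').relIndex
        (MulAction.stabilizer G ω ⊓ MulAction.stabilizer G ω') = 4 ∧
      ∃ f : ↥(MulAction.stabilizer G ω ⊓ MulAction.stabilizer G ω') →*
          Multiplicative (ZMod 2 × ZMod 2),
        Function.Surjective f ∧
        f.ker = (pstab Sg G ω ⊓ pstab Sg G ω').subgroupOf
          (MulAction.stabilizer G ω ⊓ MulAction.stabilizer G ω')) ∧
    -- (b)
    (∃ x y : G, ∃ (hx : x ∈ MulAction.stabilizer G ω) (hy : y ∈ MulAction.stabilizer G ω),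
      x ∉ MulAction.stabilizer G ω ⊓ MulAction.stabilizer G ω' ∧
      y ∈ pstab Sg G ω' ∧ y ∉ pstab Sg G ω ∧
      MulAction.stabilizer G ω =
        Subgroup.closure
          (((MulAction.stabilizer G ω ⊓ MulAction.stabilizer G ω') : Set G) ∪ {x}) ∧
      MulAction.stabilizer G ω = Subgroup.closure ((pstab Sg G ω : Set G) ∪ {x, y}) ∧
      pstab Sg G ω =
        Subgroup.closure (((pstab Sg G ω ⊓ pstab Sg G ω') : Set G) ∪ {g⁻¹ * y * g}) ∧
      (x * y) ^ 2 ∈ pstab Sg G ω ∧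
      ∃ f : ↥(MulAction.stabilizer G ω) →* DihedralGroup 4,
        Function.Surjective f ∧
        f.ker = (pstab Sg G ω).subgroupOf (MulAction.stabilizer G ω) ∧
        Subgroup.closure {f ⟨x, hx⟩, f ⟨y, hy⟩} = ⊤) ∧
    -- (c)
    (∃ gt : G, inDC (MulAction.stabilizer G ω) g gt ∧
      (∀ z : G, inDC (MulAction.stabilizer G ω) gt z ↔ inDC (MulAction.stabilizer G ω) g z) ∧
      gt • ω = ω' ∧ gt • ω' = ω ∧ gt ^ 2 ∈ pstab Sg G ω) := by
  have hloc (u : V) (hu : Sg.Adj ω u) : ∃ a : G, a • ω = ω ∧ a • ω' = u :=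
    harc ω ω' ω u hadj hu
  have hp' : IsPGroup 2 (MulAction.stabilizer G ω') := hgω ▸ h2.stabilizer_smul g
  obtain ⟨y, hyK', hyK⟩ :=
    exists_mem_pstab_not_mem_pstab hact hconn harc hadj h2 (hval ω) (by omega)
  have hyE : y ∈ MulAction.stabilizer G ω ⊓ MulAction.stabilizer G ω' :=
    ⟨pstab_le_stabilizer_of_adj hadj.symm hyK', pstab_le_stabilizer ω' hyK'⟩
  have hzK : g⁻¹ * y * g ∈ pstab Sg G ω := (mem_pstab_smul_iff hact g ω).1 (by rwa [hgω])
  have hzK' : g⁻¹ * y * g ∉ pstab Sg G ω' := fun h =>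
    hyK (hgω' ▸ (mem_pstab_smul_iff hact g ω').2 h)
  obtain ⟨f, hf, hker⟩ := exists_surjective_ker_eq_pstab_inf_pstab hact h2 hp' (hval ω)
    (hval ω') hadj hyK' hyK hzK hzK'
  obtain ⟨x, hx, hxE, hclE, hclK, hxy, hD⟩ :=
    exists_dihedral_quotient_stabilizer hact h2 (hval ω) hadj hloc hyE hyK
  refine ⟨⟨hker ▸ f.normal_ker, ?_, f, hf, hker⟩,
    ⟨x, y, hx, hyE.1, hxE, hyK', hyK, hclE, hclK,
      pstab_eq_closure_inf_insert hact hp' (hval ω') hadj hzK hzK', hxy, hD⟩,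
    exists_inDC_sq_mem_pstab hact h2 (hval ω) hadj hgω hgω' hyK' hyK⟩
  rw [Subgroup.relIndex, ← hker, Subgroup.index_ker, MonoidHom.range_eq_top.2 hf,
    Subgroup.card_top]
  simp
end
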